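/- arXiv:1310.2484 — 7 statements merged into one kernel-verified Lean document; each statement's English description precedes it below -/
import Mathlib

section
/- Let (g_{l,k} : l ≥ 1, 0 ≤ k < 2^l) be a family of independent standard normal N(0,1) random variables on a probability space. Then the random variable sup_{l ≥ 1} l^{-1/2} · max_{0 ≤ k < 2^l} |g_{l,k}| has finite expectation. -/
/-!
Each term of the supremum is at most `2 + (|g l k| / √l - 2)⁺`, so the supremum is bounded by `2`
plus the sum of all these excesses. For a standard
Gaussian `X`, the exponential Chebyshev bound `(|X| - c)⁺ ≤ e^{c (|X| - c)} / c` with `c = 2√l`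
and `E e^{c|X|} ≤ 2 e^{c²/2}` give `E (|X| / √l - 2)⁺ ≤ e^{-2l}`. The `2^l` variables of level `l`
thus contribute at most `(2 e^{-2})^l`, a summable geometric sequence.
-/

open MeasureTheory ProbabilityTheory Real
open scoped ENNReal NNReal

lemma lintegral_ofReal_exp_mul_gaussianReal (μ : ℝ) (v : ℝ≥0) (t : ℝ) :
    ∫⁻ x, ENNReal.ofReal (rexp (t * x)) ∂gaussianReal μ v
      = ENNReal.ofReal (rexp (μ * t + v * t ^ 2 / 2)) := by
  rw [← ofReal_integral_eq_lintegral_ofReal (integrable_exp_mul_gaussianReal t)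
    (ae_of_all _ fun x => (exp_pos _).le)]
  exact congrArg ENNReal.ofReal (congrFun mgf_fun_id_gaussianReal t)

lemma lintegral_ofReal_exp_mul_abs_gaussianReal_le (v : ℝ≥0) (t : ℝ) :
    ∫⁻ x, ENNReal.ofReal (rexp (t * |x|)) ∂gaussianReal 0 v
      ≤ 2 * ENNReal.ofReal (rexp (v * t ^ 2 / 2)) := by
  have hsplit : ∀ x : ℝ, ENNReal.ofReal (rexp (t * |x|))
      ≤ ENNReal.ofReal (rexp (t * x)) + ENNReal.ofReal (rexp (-t * x)) := fun x => by
    rw [← ENNReal.ofReal_add (exp_pos _).le (exp_pos _).le]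
    refine ENNReal.ofReal_le_ofReal ?_
    rcases abs_cases x with ⟨hx, _⟩ | ⟨hx, _⟩ <;> rw [hx]
    · linarith [exp_pos (-t * x)]
    · rw [mul_neg, ← neg_mul]; linarith [exp_pos (t * x)]
  calc ∫⁻ x, ENNReal.ofReal (rexp (t * |x|)) ∂gaussianReal 0 v
      ≤ ∫⁻ x, ENNReal.ofReal (rexp (t * x)) + ENNReal.ofReal (rexp (-t * x)) ∂gaussianReal 0 v :=
        lintegral_mono hsplit
    _ = 2 * ENNReal.ofReal (rexp (v * t ^ 2 / 2)) := by
        rw [lintegral_add_left (by fun_prop), lintegral_ofReal_exp_mul_gaussianReal,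
          lintegral_ofReal_exp_mul_gaussianReal, neg_sq, two_mul]
        simp

lemma lintegral_ofReal_abs_sub_gaussianReal_le {c : ℝ} (hc : 0 < c) :
    ∫⁻ x, ENNReal.ofReal (|x| - c) ∂gaussianReal 0 1
      ≤ ENNReal.ofReal (2 / c * rexp (-(c ^ 2 / 2))) := by
  have hpt : ∀ x : ℝ, ENNReal.ofReal (|x| - c)
      ≤ ENNReal.ofReal (rexp (-c ^ 2) / c) * ENNReal.ofReal (rexp (c * |x|)) := fun x => by
    rw [← ENNReal.ofReal_mul (by positivity)]
    refine ENNReal.ofReal_le_ofReal ?_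
    have hexp : rexp (-c ^ 2) / c * rexp (c * |x|) = rexp (c * (|x| - c)) / c := by
      rw [div_mul_eq_mul_div, ← exp_add]; ring_nf
    rw [hexp, le_div_iff₀ hc]
    nlinarith [add_one_le_exp (c * (|x| - c))]
  calc ∫⁻ x, ENNReal.ofReal (|x| - c) ∂gaussianReal 0 1
      ≤ ∫⁻ x, ENNReal.ofReal (rexp (-c ^ 2) / c) * ENNReal.ofReal (rexp (c * |x|))
          ∂gaussianReal 0 1 := lintegral_mono hpt
    _ ≤ ENNReal.ofReal (rexp (-c ^ 2) / c) * (2 * ENNReal.ofReal (rexp (1 * c ^ 2 / 2))) := by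
        rw [lintegral_const_mul _ (by fun_prop)]
        gcongr
        exact_mod_cast lintegral_ofReal_exp_mul_abs_gaussianReal_le 1 c
    _ = ENNReal.ofReal (2 / c * rexp (-(c ^ 2 / 2))) := by
        rw [← ENNReal.ofReal_ofNat 2, ← ENNReal.ofReal_mul zero_le_two,
          ← ENNReal.ofReal_mul (by positivity)]
        congr 1
        rw [show -(c ^ 2 / 2) = -c ^ 2 + 1 * c ^ 2 / 2 by ring, exp_add]
        ring

lemma lintegral_ofReal_abs_div_sub_two_gaussianReal_le {s : ℝ} (hs : 1 ≤ s) :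
    ∫⁻ x, ENNReal.ofReal (|x| / s - 2) ∂gaussianReal 0 1 ≤ ENNReal.ofReal (rexp (-2 * s ^ 2)) := by
  have hs0 : 0 < s := one_pos.trans_le hs
  have hpt : ∀ x : ℝ, ENNReal.ofReal (|x| / s - 2) ≤ ENNReal.ofReal (|x| - 2 * s) := fun x => by
    rcases le_total (|x| / s - 2) 0 with h | h
    · simp [ENNReal.ofReal_of_nonpos h]
    · refine ENNReal.ofReal_le_ofReal ?_
      have h' : |x| / s - 2 = (|x| - 2 * s) / s := by field_simp
      rw [h'] at h ⊢
      exact div_le_self (by simpa using (le_div_iff₀ hs0).mp h) hs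
  calc ∫⁻ x, ENNReal.ofReal (|x| / s - 2) ∂gaussianReal 0 1
      ≤ ∫⁻ x, ENNReal.ofReal (|x| - 2 * s) ∂gaussianReal 0 1 := lintegral_mono hpt
    _ ≤ ENNReal.ofReal (2 / (2 * s) * rexp (-((2 * s) ^ 2 / 2))) :=
        lintegral_ofReal_abs_sub_gaussianReal_le (by positivity)
    _ ≤ ENNReal.ofReal (rexp (-2 * s ^ 2)) := by
        refine ENNReal.ofReal_le_ofReal ?_
        rw [show -((2 * s) ^ 2 / 2) = -2 * s ^ 2 by ring]
        refine mul_le_of_le_one_left (exp_pos _).le ?_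
        rw [div_le_one (by positivity)]
        linarith

lemma lintegral_sum_ofReal_abs_div_sqrt_sub_two_le {Ω : Type*} [MeasurableSpace Ω]
    {P : Measure Ω} {X : ℕ → Ω → ℝ} {l : ℕ} (hl : 1 ≤ l)
    (hmeas : ∀ k, Measurable (X k)) (hlaw : ∀ k < 2 ^ l, P.map (X k) = gaussianReal 0 1) :
    ∫⁻ ω, ∑ k ∈ Finset.range (2 ^ l), ENNReal.ofReal (|X k ω| / √l - 2) ∂P
      ≤ ENNReal.ofReal (2 * rexp (-2)) ^ l := by
  have hs : 1 ≤ √(l : ℝ) := Real.one_le_sqrt.mpr (by exact_mod_cast hl)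
  have hk : ∀ k < 2 ^ l, ∫⁻ ω, ENNReal.ofReal (|X k ω| / √l - 2) ∂P
      ≤ ENNReal.ofReal (rexp (-2 * l)) := fun k hk => by
    rw [← lintegral_map (f := fun x => ENNReal.ofReal (|x| / √l - 2)) (by fun_prop) (hmeas k),
      hlaw k hk]
    simpa [Real.sq_sqrt (Nat.cast_nonneg l)] using
      lintegral_ofReal_abs_div_sub_two_gaussianReal_le hs
  calc ∫⁻ ω, ∑ k ∈ Finset.range (2 ^ l), ENNReal.ofReal (|X k ω| / √l - 2) ∂P
      = ∑ k ∈ Finset.range (2 ^ l), ∫⁻ ω, ENNReal.ofReal (|X k ω| / √l - 2) ∂P :=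
        lintegral_finsetSum _ fun k _ => by fun_prop
    _ ≤ ∑ _k ∈ Finset.range (2 ^ l), ENNReal.ofReal (rexp (-2 * l)) :=
        Finset.sum_le_sum fun k hk' => hk k (Finset.mem_range.mp hk')
    _ = ENNReal.ofReal (2 * rexp (-2)) ^ l := by
        rw [Finset.sum_const, Finset.card_range, nsmul_eq_mul, ← ENNReal.ofReal_pow (by positivity),
          mul_pow, ← exp_nat_mul, ENNReal.ofReal_mul (by positivity)]
        simp [mul_comm]

lemma ofReal_two_mul_exp_neg_two_lt_one : ENNReal.ofReal (2 * rexp (-2)) < 1 := by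
  rw [ENNReal.ofReal_lt_one, exp_neg, ← div_eq_mul_inv, div_lt_one (exp_pos 2)]
  linarith [add_one_lt_exp (two_ne_zero (α := ℝ))]

lemma iSup_levels_ofReal_le_add_tsum (x : ℕ → ℕ → ℝ) (a : ℝ) :
    ⨆ (l : ℕ) (_ : 1 ≤ l) (k : ℕ) (_ : k < 2 ^ l), ENNReal.ofReal (x l k)
      ≤ ENNReal.ofReal a
        + ∑' m, ∑ k ∈ Finset.range (2 ^ (m + 1)), ENNReal.ofReal (x (m + 1) k - a) := by
  refine iSup₂_le fun l hl => iSup₂_le fun k hk => ?_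
  obtain ⟨m, rfl⟩ := Nat.exists_eq_add_of_le' hl
  calc ENNReal.ofReal (x (m + 1) k)
      ≤ ENNReal.ofReal a + ENNReal.ofReal (x (m + 1) k - a) := by
        simpa using ENNReal.ofReal_add_le (p := a) (q := x (m + 1) k - a)
    _ ≤ _ := by
        gcongr
        exact (Finset.single_le_sum (fun _ _ => zero_le) (Finset.mem_range.mpr hk)).trans
          (ENNReal.le_tsum (f := fun m => ∑ k ∈ Finset.range (2 ^ (m + 1)),
            ENNReal.ofReal (x (m + 1) k - a)) m)

theorem multiscale_sup_finite_expectation_general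
    {Ω : Type*} [MeasurableSpace Ω] (P : Measure Ω) [IsProbabilityMeasure P]
    (g : ℕ → ℕ → Ω → ℝ)
    (hmeas : ∀ l k, Measurable (g l k))
    (hgauss : ∀ l k, 1 ≤ l → k < 2 ^ l → Measure.map (g l k) P = gaussianReal 0 1) :
    ∫⁻ ω, ⨆ (l : ℕ) (_ : 1 ≤ l) (k : ℕ) (_ : k < 2 ^ l),
        ENNReal.ofReal (|g l k ω| / Real.sqrt l) ∂P < ⊤ := by
  set r := ENNReal.ofReal (2 * rexp (-2))
  calc _ ≤ ∫⁻ ω, ENNReal.ofReal 2 + ∑' m, ∑ k ∈ Finset.range (2 ^ (m + 1)),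
          ENNReal.ofReal (|g (m + 1) k ω| / √↑(m + 1) - 2) ∂P :=
        lintegral_mono fun ω => iSup_levels_ofReal_le_add_tsum (fun l k => |g l k ω| / √l) 2
    _ = ENNReal.ofReal 2 + ∑' m, ∫⁻ ω, ∑ k ∈ Finset.range (2 ^ (m + 1)),
          ENNReal.ofReal (|g (m + 1) k ω| / √↑(m + 1) - 2) ∂P := by
        rw [lintegral_add_left measurable_const, lintegral_const, measure_univ, mul_one,
          lintegral_tsum fun m => by fun_prop]
    _ ≤ ENNReal.ofReal 2 + ∑' m, r ^ (m + 1) := by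
        gcongr with m
        exact lintegral_sum_ofReal_abs_div_sqrt_sub_two_le (Nat.le_add_left 1 m) (hmeas _)
          fun k hk => hgauss _ k (Nat.le_add_left 1 m) hk
    _ < ⊤ := by
        rw [ENNReal.tsum_geometric_add_one]
        have hgeom : r * (1 - r)⁻¹ < ⊤ := ENNReal.mul_lt_top ENNReal.ofReal_lt_top
          (ENNReal.inv_lt_top.mpr (tsub_pos_of_lt ofReal_two_mul_exp_neg_two_lt_one))
        exact ENNReal.add_lt_top.mpr ⟨ENNReal.ofReal_lt_top, hgeom⟩

/-- For a family `(g l k : l ≥ 1, 0 ≤ k < 2^l)` of jointly independent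
standard normal random variables, the random variable
`sup_{l ≥ 1} l^{-1/2} · max_{0 ≤ k < 2^l} |g l k|` has finite expectation. -/
theorem multiscale_sup_finite_expectation
    {Ω : Type*} [MeasurableSpace Ω] (P : Measure Ω) [IsProbabilityMeasure P]
    (g : ℕ → ℕ → Ω → ℝ)
    (hmeas : ∀ l k, Measurable (g l k))
    (hgauss : ∀ l k, 1 ≤ l → k < 2 ^ l → Measure.map (g l k) P = gaussianReal 0 1)
    (hindep : iIndepFun
      (fun p : {q : ℕ × ℕ // 1 ≤ q.1 ∧ q.2 < 2 ^ q.1} => g p.1.1 p.1.2) P) :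
    ∫⁻ ω, ⨆ (l : ℕ) (_ : 1 ≤ l) (k : ℕ) (_ : k < 2 ^ l),
        ENNReal.ofReal (|g l k ω| / Real.sqrt l) ∂P < ⊤ :=
  multiscale_sup_finite_expectation_general P g hmeas hgauss
end

section
/- Let (g_{l,k} : l ≥ 1, 0 ≤ k < 2^l) be independent standard normal random variables, and let (w_l)_{l ≥ 1} be admissible. Then almost surely w_l^{-1} · max_{0 ≤ k < 2^l} |g_{l,k}| → 0 as l → ∞; that is, the Gaussian white noise array almost surely belongs to the multiscale space M₀(w). -/
/-!
Each `g l k` is `1`-sub-Gaussian, so by a union bound over the `2 ^ l` coordinates the level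
maximum exceeds `ε * w l` with probability at most `2 ^ l * 2 * exp (-(ε * w l) ^ 2 / 2)`.
Since `w l / √l → ∞`, eventually `ε * w l ≥ 2 * √l`, and the bound becomes `2 * (2 * exp (-2)) ^ l`,
which is summable because `2 < e ^ 2`. Borel–Cantelli then gives `levelMax g l < ε * w l`
eventually, almost surely, for every `ε > 0`.
-/

open MeasureTheory ProbabilityTheory Filter

/-- The maximum `max_{0 ≤ k < 2^l} |g l k ω|` over the `2^l` coordinates at level `l`. -/
noncomputable def levelMax {Ω : Type*} (g : ℕ → ℕ → Ω → ℝ) (l : ℕ) (ω : Ω) : ℝ :=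
  (Finset.range (2 ^ l)).sup' (Finset.nonempty_range_iff.mpr (by positivity))
    (fun k => |g l k ω|)

open Real

namespace ProbabilityTheory

variable {Ω : Type*} [MeasurableSpace Ω] {μ : Measure Ω}

lemma hasSubgaussianMGF_of_map_eq_gaussianReal {X : Ω → ℝ} {v : NNReal}
    (h : μ.map X = gaussianReal 0 v) : HasSubgaussianMGF X v μ := by
  have hX : AEMeasurable X μ := aemeasurable_of_map_neZero (by rw [h]; infer_instance)
  refine (HasSubgaussianMGF.id_map_iff hX).1 ?_
  rw [h]
  exact ⟨integrable_exp_mul_gaussianReal, fun t => by simp [mgf_id_gaussianReal]⟩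

lemma HasSubgaussianMGF.measureReal_abs_ge_le {X : Ω → ℝ} {c : NNReal}
    (h : HasSubgaussianMGF X c μ) {ε : ℝ} (hε : 0 ≤ ε) :
    μ.real {ω | ε ≤ |X ω|} ≤ 2 * exp (-ε ^ 2 / (2 * c)) := by
  have hsplit : {ω | ε ≤ |X ω|} = {ω | ε ≤ X ω} ∪ {ω | ε ≤ (-X) ω} := by
    ext ω; simp [le_abs]
  calc _ ≤ μ.real {ω | ε ≤ X ω} + μ.real {ω | ε ≤ (-X) ω} := hsplit ▸ measureReal_union_le _ _
    _ ≤ _ := by linarith [h.measure_ge_le hε, h.neg.measure_ge_le hε]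

lemma measureReal_sup'_abs_ge_le {ι : Type*} {s : Finset ι} (hs : s.Nonempty) {X : ι → Ω → ℝ}
    {c : NNReal} (hX : ∀ i ∈ s, HasSubgaussianMGF (X i) c μ) {ε : ℝ} (hε : 0 ≤ ε) :
    μ.real {ω | ε ≤ s.sup' hs fun i => |X i ω|} ≤ s.card * (2 * exp (-ε ^ 2 / (2 * c))) := by
  have hunion : {ω | ε ≤ s.sup' hs fun i => |X i ω|} = ⋃ i ∈ s, {ω | ε ≤ |X i ω|} := by
    ext ω; simp [Finset.le_sup'_iff]
  calc _ ≤ ∑ i ∈ s, μ.real {ω | ε ≤ |X i ω|} := hunion ▸ measureReal_biUnion_finset_le _ _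
    _ ≤ ∑ i ∈ s, 2 * exp (-ε ^ 2 / (2 * c)) :=
        Finset.sum_le_sum fun i hi => (hX i hi).measureReal_abs_ge_le hε
    _ = _ := by rw [Finset.sum_const, nsmul_eq_mul]

end ProbabilityTheory

namespace MeasureTheory

lemma ae_eventually_notMem_of_summable {α : Type*} [MeasurableSpace α] {μ : Measure α}
    [IsFiniteMeasure μ] {s : ℕ → Set α} (hs : Summable fun i => μ.real (s i)) :
    ∀ᵐ x ∂μ, ∀ᶠ i in atTop, x ∉ s i := by
  refine ae_eventually_notMem ?_
  rw [← tsum_congr fun i => ofReal_measureReal,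
    ← ENNReal.ofReal_tsum_of_nonneg (fun _ => measureReal_nonneg) hs]
  exact ENNReal.ofReal_ne_top

end MeasureTheory

lemma two_mul_exp_neg_two_lt_one : 2 * exp (-2) < 1 := by
  have : 3 ≤ exp 2 := by linarith [add_one_le_exp (2 : ℝ)]
  rw [exp_neg, ← div_eq_mul_inv, div_lt_one (exp_pos 2)]
  linarith

lemma two_pow_mul_exp_le {l : ℕ} {t : ℝ} (ht : 2 * √l ≤ t) :
    2 ^ l * (2 * exp (-t ^ 2 / 2)) ≤ 2 * (2 * exp (-2)) ^ l := by
  have hsq : 4 * l ≤ t ^ 2 := by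
    have := pow_le_pow_left₀ (by positivity) ht 2
    rw [mul_pow, sq_sqrt (Nat.cast_nonneg l)] at this
    linarith
  have hexp : exp (-t ^ 2 / 2) ≤ exp (-2) ^ l := by
    rw [← exp_nat_mul]
    exact exp_le_exp.2 (by linarith)
  calc 2 ^ l * (2 * exp (-t ^ 2 / 2)) ≤ 2 ^ l * (2 * exp (-2) ^ l) := by gcongr
    _ = 2 * (2 * exp (-2)) ^ l := by ring

lemma ae_eventually_levelMax_lt {Ω : Type*} [MeasurableSpace Ω] {P : Measure Ω}
    [IsProbabilityMeasure P] {w : ℕ → ℝ} (hwinf : Tendsto (fun l : ℕ => w l / √l) atTop atTop)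
    {g : ℕ → ℕ → Ω → ℝ}
    (hgauss : ∀ l k, 1 ≤ l → k < 2 ^ l → P.map (g l k) = gaussianReal 0 1) {ε : ℝ} (hε : 0 < ε) :
    ∀ᵐ ω ∂P, ∀ᶠ l in atTop, levelMax g l ω < ε * w l := by
  have hlarge : ∀ᶠ l : ℕ in atTop, 1 ≤ l ∧ 2 * √l ≤ ε * w l := by
    filter_upwards [eventually_ge_atTop 1, hwinf.eventually_ge_atTop (2 / ε)] with l hl hw
    have : 0 < √(l : ℝ) := by positivity
    rw [div_le_div_iff₀ hε this] at hw
    exact ⟨hl, by linarith⟩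
  have htail : ∀ᶠ l in atTop,
      P.real {ω | ε * w l ≤ levelMax g l ω} ≤ 2 * (2 * exp (-2)) ^ l := by
    filter_upwards [hlarge] with l ⟨hl, hw⟩
    have hX : ∀ k ∈ Finset.range (2 ^ l), HasSubgaussianMGF (g l k) 1 P := fun k hk =>
      hasSubgaussianMGF_of_map_eq_gaussianReal (hgauss l k hl (Finset.mem_range.1 hk))
    have := measureReal_sup'_abs_ge_le ⟨0, by simp⟩ hX ((by positivity : 0 ≤ 2 * √l).trans hw)
    simp only [Finset.card_range, Nat.cast_pow, Nat.cast_ofNat, NNReal.coe_one, mul_one] at this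
    exact this.trans (two_pow_mul_exp_le hw)
  have hsum : Summable fun l => P.real {ω | ε * w l ≤ levelMax g l ω} :=
    ((summable_geometric_of_lt_one (by positivity) two_mul_exp_neg_two_lt_one).mul_left 2
      ).of_norm_bounded_eventually_nat
      (htail.mono fun l hl => by rwa [norm_of_nonneg measureReal_nonneg])
  filter_upwards [ae_eventually_notMem_of_summable hsum] with ω hω
  exact hω.mono fun l hl => not_le.1 hl

lemma levelMax_nonneg {Ω : Type*} (g : ℕ → ℕ → Ω → ℝ) (l : ℕ) (ω : Ω) : 0 ≤ levelMax g l ω :=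
  (abs_nonneg _).trans (Finset.le_sup' (fun k => |g l k ω|) (Finset.mem_range.2 (by positivity)))

theorem whiteNoise_mem_M0_of_admissible_general
    {Ω : Type*} [MeasurableSpace Ω] (P : Measure Ω) [IsProbabilityMeasure P]
    (w : ℕ → ℝ)
    (hwinf : Tendsto (fun l : ℕ => w l / Real.sqrt l) atTop atTop)
    (g : ℕ → ℕ → Ω → ℝ)
    (hgauss : ∀ l k, 1 ≤ l → k < 2 ^ l → Measure.map (g l k) P = gaussianReal 0 1) :
    ∀ᵐ ω ∂P, Tendsto (fun l : ℕ => levelMax g l ω / w l) atTop (nhds 0) := by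
  have hwpos : ∀ᶠ l in atTop, 0 < w l :=
    (hwinf.eventually_gt_atTop 0).mono fun l hl => pos_of_mul_pos_left
      (by rwa [div_eq_mul_inv] at hl) (inv_nonneg.2 (sqrt_nonneg l))
  have hsmall : ∀ᵐ ω ∂P, ∀ n : ℕ, ∀ᶠ l in atTop, levelMax g l ω < 1 / (n + 1) * w l :=
    ae_all_iff.2 fun n => ae_eventually_levelMax_lt hwinf hgauss (by positivity)
  filter_upwards [hsmall] with ω hω
  refine tendsto_order.2 ⟨fun a ha => hwpos.mono fun l hl => ?_, fun a ha => ?_⟩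
  · exact ha.trans_le (div_nonneg (levelMax_nonneg g l ω) hl.le)
  · obtain ⟨n, hn⟩ := exists_nat_one_div_lt ha
    filter_upwards [hω n, hwpos] with l hl hwl
    rw [div_lt_iff₀ hwl]
    exact hl.trans (mul_lt_mul_of_pos_right hn hwl)

/-- For an admissible weight sequence `(w l)` (i.e. `w l ≥ 1`,
`l ↦ w l / √l` nondecreasing on `l ≥ 1` and tending to infinity) and jointly independent
standard normals `(g l k : l ≥ 1, 0 ≤ k < 2^l)`, almost surely
`w_l⁻¹ · max_{0 ≤ k < 2^l} |g l k| → 0` as `l → ∞`; i.e. the white noise array a.s.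
belongs to the multiscale space `M₀(w)`. -/
theorem whiteNoise_mem_M0_of_admissible
    {Ω : Type*} [MeasurableSpace Ω] (P : Measure Ω) [IsProbabilityMeasure P]
    (w : ℕ → ℝ) (hw1 : ∀ l, 1 ≤ w l)
    (hwmono : ∀ l m : ℕ, 1 ≤ l → l ≤ m → w l / Real.sqrt l ≤ w m / Real.sqrt m)
    (hwinf : Tendsto (fun l : ℕ => w l / Real.sqrt l) atTop atTop)
    (g : ℕ → ℕ → Ω → ℝ)
    (hmeas : ∀ l k, Measurable (g l k))
    (hgauss : ∀ l k, 1 ≤ l → k < 2 ^ l → Measure.map (g l k) P = gaussianReal 0 1)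
    (hindep : iIndepFun
      (fun p : {q : ℕ × ℕ // 1 ≤ q.1 ∧ q.2 < 2 ^ q.1} => g p.1.1 p.1.2) P) :
    ∀ᵐ ω ∂P, Tendsto (fun l : ℕ => levelMax g l ω / w l) atTop (nhds 0) :=
  whiteNoise_mem_M0_of_admissible_general P w hwinf g hgauss
end

section
/- For every integer l ≥ 0 and every t ∈ [0,1], Σ_{0 ≤ k < 2^l} | ∫₀^t ψ_{l,k}(x) dx | ≤ 2^{−l/2 − 1}, where ψ_{l,k} are the Haar wavelets. -/
/-!
The primitive `t ↦ ∫₀^t ψ_{l,k}` is `2^{l/2}` times a tent of height `2^{-l-1}` supported on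
the dyadic interval `[k 2^{-l}, (k+1) 2^{-l}]`. These open intervals are disjoint, so for each `t`
at most one term of the sum is nonzero, and it is at most `2^{l/2} · 2^{-l-1} = 2^{-l/2-1}`.
-/

open MeasureTheory

noncomputable def haar (l k : ℕ) (x : ℝ) : ℝ :=
  if (k : ℝ) / 2 ^ l < x ∧ x ≤ ((k : ℝ) + 1 / 2) / 2 ^ l then (2 : ℝ) ^ ((l : ℝ) / 2)
  else if ((k : ℝ) + 1 / 2) / 2 ^ l < x ∧ x ≤ ((k : ℝ) + 1) / 2 ^ l then
    -((2 : ℝ) ^ ((l : ℝ) / 2))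
  else 0

open Set

/-- The tent of height `h` over `[a, a + 2h]`. -/
def tent (a h t : ℝ) : ℝ := 2 * min t (a + h) - min t a - min t (a + 2 * h)

theorem abs_tent_le (a t : ℝ) {h : ℝ} (hh : 0 ≤ h) : |tent a h t| ≤ h := by
  unfold tent
  rw [abs_le]
  constructor <;> cases min_cases t a <;> cases min_cases t (a + h) <;>
    cases min_cases t (a + 2 * h) <;> linarith

theorem tent_eq_zero_of_notMem_Ioo {a h t : ℝ} (hh : 0 ≤ h) (ht : t ∉ Ioo a (a + 2 * h)) :
    tent a h t = 0 := by
  unfold tent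
  rw [mem_Ioo, not_and_or, not_lt, not_lt] at ht
  rcases ht with ht | ht
  · rw [min_eq_left ht, min_eq_left (by linarith), min_eq_left (by linarith)]
    ring
  · rw [min_eq_right ht, min_eq_right (by linarith), min_eq_right (by linarith)]
    ring

theorem intervalIntegral_indicator_Ioc_const {a b : ℝ} (c t : ℝ) (ha : 0 ≤ a) (hab : a ≤ b) :
    ∫ x in (0 : ℝ)..t, (Ioc a b).indicator (fun _ ↦ c) x = c * (min t b - min t a) := by
  rcases le_total t 0 with ht | ht
  · rw [intervalIntegral.integral_of_ge ht, setIntegral_indicator measurableSet_Ioc,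
      Ioc_inter_Ioc, Ioc_eq_empty (by simp [ha]), Measure.restrict_empty, integral_zero_measure,
      min_eq_left (ht.trans (ha.trans hab)), min_eq_left (ht.trans ha)]
    ring
  · rw [intervalIntegral.integral_of_le ht, setIntegral_indicator measurableSet_Ioc,
      Ioc_inter_Ioc, setIntegral_const, Real.volume_real_Ioc, smul_eq_mul, max_eq_right ha]
    rcases le_total t a with hta | hat
    · rw [min_eq_left (hta.trans hab), min_eq_left hta, max_eq_right (by linarith)]
      ring
    · rw [min_eq_right hat, max_eq_left (by simp [hat, hab])]
      ring

theorem intervalIntegrable_indicator_Ioc_const (a b c t : ℝ) :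
    IntervalIntegrable ((Ioc a b).indicator fun _ ↦ c) volume 0 t := by
  rw [intervalIntegrable_iff]
  exact (integrableOn_const measure_Ioc_lt_top.ne enorm_ne_top).indicator measurableSet_Ioc

theorem add_one_div_two_pow (x : ℝ) (l : ℕ) :
    (x + 1) / 2 ^ l = x / 2 ^ l + 2 * (1 / 2 ^ (l + 1)) := by
  rw [pow_succ]; field_simp

theorem haar_eq_indicator (l k : ℕ) :
    haar l k = fun x ↦
      (Ioc ((k : ℝ) / 2 ^ l) (k / 2 ^ l + 1 / 2 ^ (l + 1))).indicator
          (fun _ ↦ (2 : ℝ) ^ ((l : ℝ) / 2)) x +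
        (Ioc ((k : ℝ) / 2 ^ l + 1 / 2 ^ (l + 1)) (k / 2 ^ l + 2 * (1 / 2 ^ (l + 1)))).indicator
          (fun _ ↦ -(2 : ℝ) ^ ((l : ℝ) / 2)) x := by
  have hmid : ((k : ℝ) + 1 / 2) / 2 ^ l = k / 2 ^ l + 1 / 2 ^ (l + 1) := by
    rw [pow_succ]; ring
  funext x
  simp only [haar, hmid, add_one_div_two_pow, indicator_apply, mem_Ioc]
  split_ifs <;> simp_all
  linarith

theorem intervalIntegral_haar (l k : ℕ) (t : ℝ) :
    ∫ x in (0 : ℝ)..t, haar l k x =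
      (2 : ℝ) ^ ((l : ℝ) / 2) * tent (k / 2 ^ l) (1 / 2 ^ (l + 1)) t := by
  have ha : (0 : ℝ) ≤ k / 2 ^ l := by positivity
  have hh : (0 : ℝ) ≤ 1 / 2 ^ (l + 1) := by positivity
  rw [haar_eq_indicator, intervalIntegral.integral_add
      (intervalIntegrable_indicator_Ioc_const _ _ _ _)
      (intervalIntegrable_indicator_Ioc_const _ _ _ _),
    intervalIntegral_indicator_Ioc_const _ _ ha (by linarith),
    intervalIntegral_indicator_Ioc_const _ _ (by linarith) (by linarith), tent]
  ring

theorem intervalIntegral_haar_eq_zero_of_notMem_Ioo {l k : ℕ} {t : ℝ}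
    (ht : t ∉ Ioo ((k : ℝ) / 2 ^ l) ((k + 1) / 2 ^ l)) :
    ∫ x in (0 : ℝ)..t, haar l k x = 0 := by
  rw [add_one_div_two_pow] at ht
  rw [intervalIntegral_haar, tent_eq_zero_of_notMem_Ioo (by positivity) ht, mul_zero]

theorem abs_intervalIntegral_haar_le (l k : ℕ) (t : ℝ) :
    |∫ x in (0 : ℝ)..t, haar l k x| ≤ (2 : ℝ) ^ (-(l : ℝ) / 2 - 1) := by
  calc |∫ x in (0 : ℝ)..t, haar l k x|
      = (2 : ℝ) ^ ((l : ℝ) / 2) * |tent (k / 2 ^ l) (1 / 2 ^ (l + 1)) t| := by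
        rw [intervalIntegral_haar, abs_mul, abs_of_pos (by positivity)]
    _ ≤ (2 : ℝ) ^ ((l : ℝ) / 2) * (1 / 2 ^ (l + 1)) := by
        gcongr; exact abs_tent_le _ _ (by positivity)
    _ = (2 : ℝ) ^ (-(l : ℝ) / 2 - 1) := by
        rw [one_div, ← Real.rpow_natCast, ← Real.rpow_neg zero_le_two,
          ← Real.rpow_add zero_lt_two]
        push_cast
        ring_nf

theorem card_filter_mem_Ioo_div_le_one (s : Finset ℕ) (x : ℝ) {d : ℝ} (hd : 0 < d) :
    (s.filter fun k : ℕ ↦ x ∈ Ioo ((k : ℝ) / d) ((k + 1) / d)).card ≤ 1 := by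
  refine Finset.card_le_one.2 fun j hj k hk ↦ ?_
  simp only [Finset.mem_filter, mem_Ioo, div_lt_iff₀ hd, lt_div_iff₀ hd] at hj hk
  have hjk : (j : ℝ) < k + 1 := by linarith
  have hkj : (k : ℝ) < j + 1 := by linarith
  norm_cast at hjk hkj
  omega

theorem haar_primitive_sum_bound_general (l : ℕ) (t : ℝ) :
    ∑ k ∈ Finset.range (2 ^ l), |∫ x in (0 : ℝ)..t, haar l k x| ≤
      (2 : ℝ) ^ (-(l : ℝ) / 2 - 1) := by
  set B : ℝ := 2 ^ (-(l : ℝ) / 2 - 1)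
  set active := (Finset.range (2 ^ l)).filter fun k : ℕ ↦
    t ∈ Ioo ((k : ℝ) / 2 ^ l) ((k + 1) / 2 ^ l)
  have hactive : active.card ≤ 1 := card_filter_mem_Ioo_div_le_one _ t (by positivity)
  calc ∑ k ∈ Finset.range (2 ^ l), |∫ x in (0 : ℝ)..t, haar l k x|
      = ∑ k ∈ active, |∫ x in (0 : ℝ)..t, haar l k x| := by
        refine (Finset.sum_filter_of_ne fun k _ hk ↦ ?_).symm
        by_contra ht
        exact hk (by rw [intervalIntegral_haar_eq_zero_of_notMem_Ioo ht, abs_zero])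
    _ ≤ active.card • B :=
        Finset.sum_le_card_nsmul _ _ _ fun k _ ↦ abs_intervalIntegral_haar_le l k t
    _ ≤ B := by
        rw [nsmul_eq_mul]
        exact mul_le_of_le_one_left (by positivity) (by exact_mod_cast hactive)

/-- For every level `l ≥ 0` and every `t ∈ [0,1]`,
`Σ_{0 ≤ k < 2^l} |∫₀^t ψ_{l,k}(x) dx| ≤ 2^{−l/2 − 1}`. -/
theorem haar_primitive_sum_bound (l : ℕ) (t : ℝ) (ht : t ∈ Set.Icc (0 : ℝ) 1) :
    ∑ k ∈ Finset.range (2 ^ l), |∫ x in (0 : ℝ)..t, haar l k x| ≤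
      (2 : ℝ) ^ (-(l : ℝ) / 2 - 1) :=
  haar_primitive_sum_bound_general l t
end

section
/- Let D ≥ 1 and let X_1, …, X_n be i.i.d. random variables taking values in [0,1] whose common law has a density f with respect to Lebesgue measure satisfying ‖f‖_∞ ≤ D. Then there exist constants c > 0 and M ≥ 1 depending only on D such that for every integer l ≥ 1 with 2^l · l ≤ n, every 0 ≤ k < 2^l, and every u ≥ M, P( | Σ_{i=1}^n ( ψ_{l,k}(X_i) − E[ψ_{l,k}(X_1)] ) | > √(n l) · u ) ≤ 2 · exp( −c l u ). -/
open MeasureTheory ProbabilityTheory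

/-!
Bernstein's inequality for bounded i.i.d. summands: if `|Y| ≤ B`, `E Y = 0` and `E Y² ≤ v`, then
`exp x ≤ 1 + x + x²` on `[-1, 1]` gives `E exp (t Y) ≤ exp (t² v)` for `|t| B ≤ 1`, and the
Chernoff bound for the sum of `n` independent copies yields tails `exp (-t s + n t² v)`.
For `ψ_{l,k}` one has `B = 2 ^ (l/2 + 1)` and `v ≤ ‖f‖_∞ ∫ ψ_{l,k}² ≤ D`. With `s = √(n l) u` the
choice `t = √(l/n) / (2D)` gives exponent `-(l u)/(2D) + l/(4D) ≤ -(l u)/(4D)` once `u ≥ 1`, and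
`2 ^ l l ≤ n` is exactly what makes this `t` admissible.
-/

open Real Set

section Haar

lemma measurable_haar (l k : ℕ) : Measurable (haar l k) :=
  Measurable.ite measurableSet_Ioc measurable_const
    (Measurable.ite measurableSet_Ioc measurable_const measurable_const)

lemma abs_haar_le (l k : ℕ) (x : ℝ) : |haar l k x| ≤ 2 ^ ((l : ℝ) / 2) := by
  have h : (0 : ℝ) < 2 ^ ((l : ℝ) / 2) := by positivity
  unfold haar
  split_ifs <;> simp [abs_of_pos h, h.le]

lemma two_rpow_half_sq (l : ℕ) : ((2 : ℝ) ^ ((l : ℝ) / 2)) ^ 2 = 2 ^ l := by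
  rw [← rpow_natCast _ 2, ← rpow_mul zero_le_two]
  norm_num

lemma haar_sq (l k : ℕ) :
    (fun x => haar l k x ^ 2) =
      (Ioc ((k : ℝ) / 2 ^ l) ((k + 1) / 2 ^ l)).indicator (fun _ => 2 ^ l) := by
  ext x
  simp only [haar, indicator, mem_Ioc]
  split_ifs <;> first | simp [two_rpow_half_sq]; done | (exfalso; grind)

lemma integrable_haar_sq (l k : ℕ) : Integrable (fun x => haar l k x ^ 2) := by
  rw [haar_sq]
  exact (integrableOn_const measure_Ioc_lt_top.ne).integrable_indicator measurableSet_Ioc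

lemma integral_haar_sq (l k : ℕ) : ∫ x, haar l k x ^ 2 = 1 := by
  rw [haar_sq, integral_indicator measurableSet_Ioc, setIntegral_const, measureReal_def,
    volume_Ioc, ← sub_div, add_sub_cancel_left, ENNReal.toReal_ofReal (by positivity), smul_eq_mul,
    one_div_mul_cancel (by positivity)]

end Haar

lemma integral_withDensity_le_mul_integral {α : Type*} [MeasurableSpace α] {ν : Measure α}
    {f g : α → ℝ} {D : ℝ} (hf : Measurable f) (hf₀ : ∀ᵐ x ∂ν, 0 ≤ f x) (hfD : ∀ᵐ x ∂ν, f x ≤ D)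
    (hg₀ : ∀ x, 0 ≤ g x) (hg : Integrable g ν) :
    ∫ x, g x ∂ν.withDensity (fun x => ENNReal.ofReal (f x)) ≤ D * ∫ x, g x ∂ν := by
  rw [integral_withDensity_eq_integral_toReal_smul hf.ennreal_ofReal
    (.of_forall fun _ => ENNReal.ofReal_lt_top), ← integral_const_mul]
  refine integral_mono_of_nonneg (.of_forall fun x => smul_nonneg ENNReal.toReal_nonneg (hg₀ x))
    (hg.const_mul D) ?_
  filter_upwards [hf₀, hfD] with x hx₀ hxD
  rw [smul_eq_mul, ENNReal.toReal_ofReal hx₀]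
  exact mul_le_mul_of_nonneg_right hxD (hg₀ x)

section Bernstein

variable {Ω : Type*} [MeasurableSpace Ω] {P : Measure Ω}

lemma mgf_le_exp_sq_mul_of_abs_le [IsProbabilityMeasure P] {Y : Ω → ℝ} {B v t : ℝ}
    (hY : Measurable Y) (hYB : ∀ ω, |Y ω| ≤ B) (hmean : ∫ ω, Y ω ∂P = 0)
    (hvar : ∫ ω, Y ω ^ 2 ∂P ≤ v) (htB : |t| * B ≤ 1) :
    mgf Y P t ≤ exp (t ^ 2 * v) := by
  have htY : ∀ ω, |t * Y ω| ≤ 1 := fun ω => by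
    rw [abs_mul]
    exact (mul_le_mul_of_nonneg_left (hYB ω) (abs_nonneg t)).trans htB
  have hexp : ∀ ω, exp (t * Y ω) ≤ 1 + t * Y ω + t ^ 2 * Y ω ^ 2 := fun ω => by
    have := (abs_le.1 (abs_exp_sub_one_sub_id_le (htY ω))).2
    linarith [mul_pow t (Y ω) 2]
  have hYi : Integrable Y P :=
    .of_bound hY.aestronglyMeasurable B (.of_forall hYB)
  have hY2i : Integrable (fun ω => Y ω ^ 2) P :=
    .of_bound (hY.pow_const 2).aestronglyMeasurable (B ^ 2) (.of_forall fun ω => by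
      rw [Real.norm_eq_abs, abs_pow]
      exact pow_le_pow_left₀ (abs_nonneg _) (hYB ω) 2)
  have hexpi : Integrable (fun ω => exp (t * Y ω)) P :=
    .of_bound (hY.const_mul t).exp.aestronglyMeasurable (exp 1) (.of_forall fun ω => by
      rw [Real.norm_eq_abs, abs_exp]
      exact exp_le_exp.2 ((le_abs_self _).trans (htY ω)))
  have hlin : Integrable (fun ω => 1 + t * Y ω) P := (integrable_const 1).add (hYi.const_mul t)
  have hquad : Integrable (fun ω => t ^ 2 * Y ω ^ 2) P := hY2i.const_mul _
  calc mgf Y P t ≤ ∫ ω, (1 + t * Y ω + t ^ 2 * Y ω ^ 2) ∂P :=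
        integral_mono hexpi (hlin.add hquad) hexp
    _ = 1 + t ^ 2 * ∫ ω, Y ω ^ 2 ∂P := by
        rw [integral_add hlin hquad, integral_add (integrable_const 1) (hYi.const_mul t),
          integral_const_mul, integral_const_mul, hmean]
        simp
    _ ≤ 1 + t ^ 2 * v := by gcongr
    _ ≤ exp (t ^ 2 * v) := by linarith [add_one_le_exp (t ^ 2 * v)]

variable {ι : Type*} [Fintype ι] {Y : ι → Ω → ℝ} {B v t : ℝ}

lemma measureReal_le_sum_le_of_abs_le (hindep : iIndepFun Y P) (hY : ∀ i, Measurable (Y i))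
    (hYB : ∀ i ω, |Y i ω| ≤ B) (hmean : ∀ i, ∫ ω, Y i ω ∂P = 0)
    (hvar : ∀ i, ∫ ω, Y i ω ^ 2 ∂P ≤ v) (ht : 0 ≤ t) (htB : t * B ≤ 1) (s : ℝ) :
    P.real {ω | s ≤ ∑ i, Y i ω} ≤ exp (-t * s + Fintype.card ι * (t ^ 2 * v)) := by
  have := hindep.isProbabilityMeasure
  have hexpi : ∀ i ∈ Finset.univ, Integrable (fun ω => exp (t * Y i ω)) P := fun i _ =>
    .of_bound ((hY i).const_mul t).exp.aestronglyMeasurable (exp (t * B))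
      (.of_forall fun ω => by
        rw [Real.norm_eq_abs, abs_exp]
        exact exp_le_exp.2 (mul_le_mul_of_nonneg_left ((le_abs_self _).trans (hYB i ω)) ht))
  have hmgf : mgf (∑ i, Y i) P t ≤ exp (Fintype.card ι * (t ^ 2 * v)) := by
    rw [hindep.mgf_sum hY]
    calc ∏ i, mgf (Y i) P t ≤ ∏ _i : ι, exp (t ^ 2 * v) :=
          Finset.prod_le_prod (fun _ _ => mgf_nonneg) fun i _ =>
            mgf_le_exp_sq_mul_of_abs_le (hY i) (hYB i) (hmean i) (hvar i)
              (by rwa [abs_of_nonneg ht])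
      _ = exp (Fintype.card ι * (t ^ 2 * v)) := by
          rw [Finset.prod_const, Finset.card_univ, exp_nat_mul]
  calc P.real {ω | s ≤ ∑ i, Y i ω} ≤ exp (-t * s) * mgf (∑ i, Y i) P t := by
        simpa only [Finset.sum_apply] using
          measure_ge_le_exp_mul_mgf s ht (hindep.integrable_exp_mul_sum hY hexpi)
    _ ≤ exp (-t * s) * exp (Fintype.card ι * (t ^ 2 * v)) := by gcongr
    _ = exp (-t * s + Fintype.card ι * (t ^ 2 * v)) := (exp_add _ _).symm

lemma measure_lt_abs_sum_le_of_abs_le (hindep : iIndepFun Y P) (hY : ∀ i, Measurable (Y i))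
    (hYB : ∀ i ω, |Y i ω| ≤ B) (hmean : ∀ i, ∫ ω, Y i ω ∂P = 0)
    (hvar : ∀ i, ∫ ω, Y i ω ^ 2 ∂P ≤ v) (ht : 0 ≤ t) (htB : t * B ≤ 1) (s : ℝ) :
    P {ω | s < |∑ i, Y i ω|} ≤
      ENNReal.ofReal (2 * exp (-t * s + Fintype.card ι * (t ^ 2 * v))) := by
  have := hindep.isProbabilityMeasure
  have hupper := measureReal_le_sum_le_of_abs_le hindep hY hYB hmean hvar ht htB s
  have hlower := measureReal_le_sum_le_of_abs_le (Y := fun i ω => -Y i ω)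
    (hindep.comp (fun _ => Neg.neg) fun _ => measurable_neg) (fun i => (hY i).neg)
    (fun i ω => (abs_neg (Y i ω)).trans_le (hYB i ω))
    (fun i => by rw [integral_neg, hmean i, neg_zero])
    (fun i => by simpa only [neg_sq] using hvar i) ht htB s
  have hsub : {ω | s < |∑ i, Y i ω|} ⊆ {ω | s ≤ ∑ i, Y i ω} ∪ {ω | s ≤ ∑ i, -Y i ω} :=
    fun ω hω => by
      simp only [Set.mem_union, Set.mem_ofPred_eq, Finset.sum_neg_distrib] at hω ⊢
      rcases lt_abs.1 hω with h | h
      exacts [Or.inl h.le, Or.inr h.le]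
  rw [← ofReal_measureReal]
  refine ENNReal.ofReal_le_ofReal ?_
  calc P.real {ω | s < |∑ i, Y i ω|}
      ≤ P.real ({ω | s ≤ ∑ i, Y i ω} ∪ {ω | s ≤ ∑ i, -Y i ω}) := measureReal_mono hsub
    _ ≤ P.real {ω | s ≤ ∑ i, Y i ω} + P.real {ω | s ≤ ∑ i, -Y i ω} := measureReal_union_le _ _
    _ ≤ _ := by linarith

lemma measure_lt_abs_sum_sub_integral_le {α : Type*} [MeasurableSpace α] {μ : Measure α}
    [IsProbabilityMeasure μ] {X : ι → Ω → α} (hX : ∀ i, Measurable (X i))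
    (hmap : ∀ i, P.map (X i) = μ) (hindep : iIndepFun X P) {φ : α → ℝ} (hφ : Measurable φ)
    (hφB : ∀ x, |φ x| ≤ B) (ht : 0 ≤ t) (htB : t * (2 * B) ≤ 1) (s : ℝ) :
    P {ω | s < |∑ i, (φ (X i ω) - ∫ x, φ x ∂μ)|} ≤
      ENNReal.ofReal (2 * exp (-t * s + Fintype.card ι * (t ^ 2 * ∫ x, φ x ^ 2 ∂μ))) := by
  set m := ∫ x, φ x ∂μ
  have hcomp : ∀ i {ψ : α → ℝ}, Measurable ψ → ∫ ω, ψ (X i ω) ∂P = ∫ x, ψ x ∂μ :=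
    fun i ψ hψ => by rw [← hmap i, integral_map (hX i).aemeasurable hψ.aestronglyMeasurable]
  have hφB' : ∀ᵐ x ∂μ, ‖φ x‖ ≤ B := .of_forall hφB
  have hm : |m| ≤ B := by simpa using norm_integral_le_of_norm_le_const hφB'
  refine measure_lt_abs_sum_le_of_abs_le (Y := fun i ω => φ (X i ω) - m)
    (hindep.comp (fun _ x => φ x - m) fun _ => hφ.sub_const m)
    (fun i => (hφ.sub_const m).comp (hX i)) (fun i ω => ?_) (fun i => ?_) (fun i => ?_) ht htB s
  · exact (abs_sub _ _).trans (by linarith [hφB (X i ω)])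
  · rw [hcomp i (hφ.sub_const m), integral_sub (.of_bound hφ.aestronglyMeasurable B hφB')
      (integrable_const m), integral_const, probReal_univ, one_smul, sub_self]
  · rw [hcomp i ((hφ.sub_const m).pow_const 2), ← variance_eq_integral hφ.aemeasurable]
    exact variance_le_expectation_sq hφ.aestronglyMeasurable

end Bernstein

lemma sqrt_div_mul_le_one {l n b : ℝ} (hn : 0 < n) (hb : 0 ≤ b) (hbl : b ^ 2 * l ≤ n) :
    √(l / n) * b ≤ 1 := by
  rw [← sqrt_sq hb, ← sqrt_mul' _ (sq_nonneg b), sqrt_le_one, div_mul_eq_mul_div, div_le_one hn]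
  linarith

lemma bernstein_exponent_le {n l D u : ℝ} (hn : 0 < n) (hl : 0 ≤ l) (hD : 0 < D) (hu : 1 ≤ u) :
    -(√(l / n) / (2 * D)) * (√(n * l) * u) + n * ((√(l / n) / (2 * D)) ^ 2 * D) ≤
      -(4 * D)⁻¹ * l * u := by
  have hcross : √(l / n) * √(n * l) = l := by
    rw [← sqrt_mul (by positivity), div_mul_eq_mul_div, mul_comm n l, ← mul_assoc,
      mul_div_assoc, div_self hn.ne', mul_one, sqrt_mul_self hl]
  have hsq : √(l / n) ^ 2 = l / n := sq_sqrt (by positivity)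
  calc -(√(l / n) / (2 * D)) * (√(n * l) * u) + n * ((√(l / n) / (2 * D)) ^ 2 * D)
      = -(√(l / n) * √(n * l)) * u / (2 * D) + n * √(l / n) ^ 2 / (4 * D) := by
        field_simp; ring
    _ = (l - 2 * (l * u)) / (4 * D) := by
        rw [hcross, hsq, mul_div_cancel₀ _ hn.ne']
        field_simp
        ring
    _ ≤ -(l * u) / (4 * D) := by
        gcongr
        linarith [mul_le_mul_of_nonneg_left hu hl]
    _ = -(4 * D)⁻¹ * l * u := by ring

/-- Let `D ≥ 1` and let `X 0, …, X (n-1)` be i.i.d. on `[0,1]` with common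
law having density `f` with `‖f‖_∞ ≤ D`. Then there are constants `c > 0` and `M ≥ 1`
depending only on `D` such that for every `l ≥ 1` with `2^l · l ≤ n`, every `k < 2^l`, and
every `u ≥ M`,
`P(|Σ_{i<n} (ψ_{l,k}(X_i) − E ψ_{l,k}(X_0))| > √(n l) · u) ≤ 2 exp(−c l u)`. -/
theorem bernstein_haar_concentration (D : ℝ) (hD : 1 ≤ D) :
    ∃ c : ℝ, 0 < c ∧ ∃ M : ℝ, 1 ≤ M ∧
      ∀ (Ω : Type) (_ : MeasurableSpace Ω) (P : Measure Ω), IsProbabilityMeasure P →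
      ∀ (n : ℕ) (X : Fin n → Ω → ℝ) (f : ℝ → ℝ), Measurable f →
      (∀ᵐ x ∂(volume : Measure ℝ), 0 ≤ f x) →
      (∀ᵐ x ∂(volume : Measure ℝ), x ∉ Set.Icc (0 : ℝ) 1 → f x = 0) →
      (∀ᵐ x ∂(volume : Measure ℝ), f x ≤ D) →
      ∀ (μ : Measure ℝ), μ = volume.withDensity (fun x => ENNReal.ofReal (f x)) →
      (∀ i, Measurable (X i)) →
      (∀ i, Measure.map (X i) P = μ) →
      iIndepFun X P →
      ∀ (l k : ℕ) (u : ℝ), 1 ≤ l → 2 ^ l * l ≤ n → k < 2 ^ l → M ≤ u →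
        P {ω | Real.sqrt ((n : ℝ) * l) * u <
            |∑ i, (haar l k (X i ω) - ∫ x, haar l k x ∂μ)|} ≤
          ENNReal.ofReal (2 * Real.exp (-c * l * u)) := by
  refine ⟨(4 * D)⁻¹, by positivity, 1, le_rfl, ?_⟩
  intro Ω _ P _ n X f hf hf₀ _ hfD μ hμ hX hmap hindep l k u hl hn _ hu
  have hn₀ : 0 < n := (Nat.mul_pos (by positivity) hl).trans_le hn
  have : IsProbabilityMeasure μ :=
    hmap ⟨0, hn₀⟩ ▸ Measure.isProbabilityMeasure_map (hX _).aemeasurable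
  have hsecond : ∫ x, haar l k x ^ 2 ∂μ ≤ D := by
    simpa [hμ, integral_haar_sq] using integral_withDensity_le_mul_integral hf hf₀ hfD
      (fun x => sq_nonneg (haar l k x)) (integrable_haar_sq l k)
  set t := √(l / n) / (2 * D)
  have hstep : t * (2 * 2 ^ ((l : ℝ) / 2)) ≤ 1 := by
    have := sqrt_div_mul_le_one (l := l) (b := 2 ^ ((l : ℝ) / 2)) (Nat.cast_pos.2 hn₀)
      (by positivity) (by rw [two_rpow_half_sq]; exact_mod_cast hn)
    calc t * (2 * 2 ^ ((l : ℝ) / 2)) = √(l / n) * 2 ^ ((l : ℝ) / 2) / D := by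
          simp only [t]; field_simp
      _ ≤ 1 := by rw [div_le_one (by positivity)]; linarith
  refine (measure_lt_abs_sum_sub_integral_le hX hmap hindep (measurable_haar l k)
    (abs_haar_le l k) (by positivity) hstep _).trans (ENNReal.ofReal_le_ofReal ?_)
  rw [Fintype.card_fin]
  gcongr 2 * exp ?_
  calc _ ≤ -t * (√(n * l) * u) + n * (t ^ 2 * D) := by gcongr
    _ ≤ -(4 * D)⁻¹ * l * u :=
      bernstein_exponent_le (by positivity) (by positivity) (by positivity) hu
end

section
/- Let f and f₀ be probability densities on [0,1] (nonnegative Borel functions integrating to 1 with respect to Lebesgue measure) with ‖f₀‖_∞ < ∞, and let g : [0,1] → ℝ be bounded measurable. Let C₁, C₂ > 0 and suppose that h(f, f₀) · ‖g‖_∞ ≤ C₁ and ∫₀¹ g² ≤ C₂, where h(f, f₀) = ( ∫₀¹ (√f − √f₀)² )^{1/2} denotes the Hellinger distance. Then | ∫₀¹ g² (f − f₀) | ≤ C₁² + C₁ · √( 4 C₂ ‖f₀‖_∞ + C₁² ). -/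
/-!
Writing `f - f₀ = (√f - √f₀)² + 2 √f₀ (√f - √f₀)` splits `∫ g² (f - f₀)` into a nonnegative part,
at most `‖g‖∞² h² ≤ C₁²`, and a cross term which Cauchy–Schwarz bounds by
`2 h ‖g² √f₀‖₂ ≤ 2 h ‖g‖∞ (‖f₀‖∞ ∫ g²)^{1/2} ≤ 2 C₁ (‖f₀‖∞ C₂)^{1/2}`.
Finally `2 (‖f₀‖∞ C₂)^{1/2} ≤ (4 C₂ ‖f₀‖∞ + C₁²)^{1/2}`.
-/

open MeasureTheory

/-- In this convention there is no factor `1/2` under the root. -/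
noncomputable def hellingerDist {α : Type*} [MeasurableSpace α] (μ : Measure α) (f f₀ : α → ℝ) :
    ℝ :=
  √(∫ x, (√(f x) - √(f₀ x)) ^ 2 ∂μ)

lemma Real.sub_eq_sq_sqrt_sub_add {a b : ℝ} (ha : 0 ≤ a) (hb : 0 ≤ b) :
    a - b = (√a - √b) ^ 2 + 2 * (√b * (√a - √b)) := by
  nlinarith [Real.sq_sqrt ha, Real.sq_sqrt hb]

lemma Real.sq_mul_sqrt_le {w W a D : ℝ} (hw : 0 ≤ w) (hwW : w ≤ W) (ha : 0 ≤ a) (haD : a ≤ D) :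
    (w * √a) ^ 2 ≤ W * D * w := by
  rw [mul_pow, Real.sq_sqrt ha]
  nlinarith [mul_le_mul_of_nonneg_left (mul_le_mul hwW haD ha (hw.trans hwW)) hw]

section

variable {α : Type*} [MeasurableSpace α] {μ : Measure α}

lemma abs_integral_mul_le_sqrt_mul_sqrt {u v : α → ℝ} (hu : MemLp u 2 μ) (hv : MemLp v 2 μ) :
    |∫ x, u x * v x ∂μ| ≤ √(∫ x, u x ^ 2 ∂μ) * √(∫ x, v x ^ 2 ∂μ) := by
  have h := integral_mul_norm_le_Lp_mul_Lq Real.HolderConjugate.two_two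
    (by simpa using hu) (by simpa using hv)
  simp only [Real.norm_eq_abs, Real.rpow_two, sq_abs, ← Real.sqrt_eq_rpow] at h
  calc |∫ x, u x * v x ∂μ| ≤ ∫ x, |u x * v x| ∂μ := abs_integral_le_integral_abs
    _ = ∫ x, |u x| * |v x| ∂μ := by simp only [abs_mul]
    _ ≤ _ := h

lemma memLp_two_sqrt {f : α → ℝ} (hf : Integrable f μ) (hf_nn : 0 ≤ᵐ[μ] f) :
    MemLp (fun x => √(f x)) 2 μ := by
  refine (memLp_two_iff_integrable_sq hf.aemeasurable.sqrt.aestronglyMeasurable).2 ?_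
  refine hf.congr ?_
  filter_upwards [hf_nn] with x hx
  rw [Real.sq_sqrt hx]

lemma memLp_two_of_sq_le {u w : α → ℝ} (hu : AEStronglyMeasurable u μ) (hw : Integrable w μ)
    (huw : ∀ᵐ x ∂μ, u x ^ 2 ≤ w x) : MemLp u 2 μ :=
  (memLp_two_iff_integrable_sq hu).2 <| hw.mono' (hu.pow 2) <| by
    filter_upwards [huw] with x hx
    rwa [Real.norm_of_nonneg (sq_nonneg _)]

lemma hellingerDist_sq {f f₀ : α → ℝ} : hellingerDist μ f f₀ ^ 2 = ∫ x, (√(f x) - √(f₀ x)) ^ 2 ∂μ :=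
  Real.sq_sqrt (integral_nonneg fun _ => sq_nonneg _)

theorem abs_integral_mul_sub_le_hellingerDist {f f₀ w : α → ℝ} {W D : ℝ}
    (hf : Integrable f μ) (hf₀ : Integrable f₀ μ) (hw : Integrable w μ)
    (hf_nn : 0 ≤ᵐ[μ] f) (hf₀_nn : 0 ≤ᵐ[μ] f₀) (hf₀D : ∀ᵐ x ∂μ, f₀ x ≤ D)
    (hw_nn : 0 ≤ᵐ[μ] w) (hwW : ∀ᵐ x ∂μ, w x ≤ W) :
    |∫ x, w x * (f x - f₀ x) ∂μ| ≤
      W * hellingerDist μ f f₀ ^ 2 + 2 * (√(W * D * ∫ x, w x ∂μ) * hellingerDist μ f f₀) := by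
  set v : α → ℝ := fun x => √(f x) - √(f₀ x)
  set u : α → ℝ := fun x => w x * √(f₀ x)
  have hv : MemLp v 2 μ := (memLp_two_sqrt hf hf_nn).sub (memLp_two_sqrt hf₀ hf₀_nn)
  have hu_sq : ∀ᵐ x ∂μ, u x ^ 2 ≤ W * D * w x := by
    filter_upwards [hf₀_nn, hf₀D, hw_nn, hwW] with x hf₀x hDx hwx hWx
    exact Real.sq_mul_sqrt_le hwx hWx hf₀x hDx
  have hu : MemLp u 2 μ :=
    memLp_two_of_sq_le (hw.aestronglyMeasurable.mul hf₀.aemeasurable.sqrt.aestronglyMeasurable)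
      (hw.const_mul _) hu_sq
  have hwv_int : Integrable (fun x => w x * v x ^ 2) μ :=
    hv.integrable_sq.bdd_mul hw.aestronglyMeasurable <| by
      filter_upwards [hw_nn, hwW] with x hwx hWx
      rwa [Real.norm_of_nonneg hwx]
  have huv_int : Integrable (fun x => u x * v x) μ := hu.integrable_mul hv
  have hsplit : ∫ x, w x * (f x - f₀ x) ∂μ = ∫ x, w x * v x ^ 2 ∂μ + 2 * ∫ x, u x * v x ∂μ := by
    rw [← integral_const_mul, ← integral_add hwv_int (huv_int.const_mul 2)]
    refine integral_congr_ae ?_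
    filter_upwards [hf_nn, hf₀_nn] with x hfx hf₀x
    simp only [u, v]
    rw [Real.sub_eq_sq_sqrt_sub_add hfx hf₀x]
    ring
  have hfirst : ∫ x, w x * v x ^ 2 ∂μ ≤ W * hellingerDist μ f f₀ ^ 2 := by
    rw [hellingerDist_sq, ← integral_const_mul]
    refine integral_mono_ae hwv_int (hv.integrable_sq.const_mul W) ?_
    filter_upwards [hwW] with x hWx
    exact mul_le_mul_of_nonneg_right hWx (sq_nonneg _)
  have hsecond : |∫ x, u x * v x ∂μ| ≤ √(W * D * ∫ x, w x ∂μ) * hellingerDist μ f f₀ := by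
    refine (abs_integral_mul_le_sqrt_mul_sqrt hu hv).trans ?_
    rw [← integral_const_mul]
    have hu_int_sq := integral_mono_ae hu.integrable_sq (hw.const_mul _) hu_sq
    exact mul_le_mul_of_nonneg_right (Real.sqrt_le_sqrt hu_int_sq) (Real.sqrt_nonneg _)
  have hfirst_nn : 0 ≤ ∫ x, w x * v x ^ 2 ∂μ :=
    integral_nonneg_of_ae <| by
      filter_upwards [hw_nn] with x hwx
      exact mul_nonneg hwx (sq_nonneg _)
  rw [hsplit]
  calc _ ≤ |∫ x, w x * v x ^ 2 ∂μ| + 2 * |∫ x, u x * v x ∂μ| :=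
        (abs_add_le _ _).trans_eq (by rw [abs_mul, abs_two])
    _ ≤ _ := by rw [abs_of_nonneg hfirst_nn]; gcongr

end

lemma integrable_sq_of_abs_le {α : Type*} [MeasurableSpace α] {μ : Measure α} [IsFiniteMeasure μ]
    {g : α → ℝ} {G : ℝ} (hg : AEStronglyMeasurable g μ) (hgG : ∀ᵐ x ∂μ, |g x| ≤ G) :
    Integrable (fun x => g x ^ 2) μ :=
  .of_bound (hg.pow 2) (G ^ 2) <| by
    filter_upwards [hgG] with x hx
    rw [norm_pow, Real.norm_eq_abs, sq_abs]
    exact sq_le_sq.2 (hx.trans (le_abs_self G))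

lemma sq_add_mul_two_sqrt_le {a C₁ C₂ D s : ℝ} (ha : 0 ≤ a) (haC : a ≤ C₁) (hD : 0 ≤ D)
    (hs : 0 ≤ s) (hsC : s ≤ C₂) :
    a ^ 2 + a * (2 * √(D * s)) ≤ C₁ ^ 2 + C₁ * √(4 * C₂ * D + C₁ ^ 2) := by
  have hC₁ : 0 ≤ C₁ := ha.trans haC
  have hsqrt : 2 * √(D * s) ≤ √(4 * C₂ * D + C₁ ^ 2) := by
    rw [Real.le_sqrt (by positivity) (by nlinarith), mul_pow, Real.sq_sqrt (by positivity)]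
    nlinarith [mul_le_mul_of_nonneg_left hsC hD]
  gcongr

theorem hellinger_second_moment_bound_general
    (f f₀ g : ℝ → ℝ) (hg : Measurable g)
    (hfpos : ∀ x ∈ Set.Icc (0 : ℝ) 1, 0 ≤ f x)
    (hf₀pos : ∀ x ∈ Set.Icc (0 : ℝ) 1, 0 ≤ f₀ x)
    (hfint : (∫ x in Set.Icc (0 : ℝ) 1, f x) = 1)
    (hf₀int : (∫ x in Set.Icc (0 : ℝ) 1, f₀ x) = 1)
    (D : ℝ) (hD : ∀ x ∈ Set.Icc (0 : ℝ) 1, f₀ x ≤ D)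
    (G C₁ C₂ : ℝ)
    (hgG : ∀ x ∈ Set.Icc (0 : ℝ) 1, |g x| ≤ G)
    (hhel : Real.sqrt (∫ x in Set.Icc (0 : ℝ) 1,
        (Real.sqrt (f x) - Real.sqrt (f₀ x)) ^ 2) * G ≤ C₁)
    (hg2 : (∫ x in Set.Icc (0 : ℝ) 1, (g x) ^ 2) ≤ C₂) :
    |∫ x in Set.Icc (0 : ℝ) 1, (g x) ^ 2 * (f x - f₀ x)| ≤
      C₁ ^ 2 + C₁ * Real.sqrt (4 * C₂ * D + C₁ ^ 2) := by
  have h0 : (0 : ℝ) ∈ Set.Icc (0 : ℝ) 1 := ⟨le_rfl, zero_le_one⟩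
  have hG : 0 ≤ G := (abs_nonneg _).trans (hgG 0 h0)
  have hD₀ : 0 ≤ D := (hf₀pos 0 h0).trans (hD 0 h0)
  have hgG_ae : ∀ᵐ x ∂volume.restrict (Set.Icc (0 : ℝ) 1), |g x| ≤ G :=
    ae_restrict_of_forall_mem measurableSet_Icc hgG
  have key := abs_integral_mul_sub_le_hellingerDist
    (.of_integral_ne_zero (by rw [hfint]; exact one_ne_zero))
    (.of_integral_ne_zero (by rw [hf₀int]; exact one_ne_zero))
    (integrable_sq_of_abs_le hg.aestronglyMeasurable hgG_ae)
    (ae_restrict_of_forall_mem measurableSet_Icc hfpos)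
    (ae_restrict_of_forall_mem measurableSet_Icc hf₀pos)
    (ae_restrict_of_forall_mem measurableSet_Icc hD)
    (ae_of_all _ fun x => sq_nonneg (g x))
    (hgG_ae.mono fun x hx => sq_le_sq.2 (hx.trans (le_abs_self G)))
  set h := hellingerDist (volume.restrict (Set.Icc (0 : ℝ) 1)) f f₀
  have hg2_nn : 0 ≤ ∫ x in Set.Icc (0 : ℝ) 1, g x ^ 2 := integral_nonneg fun x => sq_nonneg _
  calc _ ≤ _ := key
    _ = (h * G) ^ 2 + h * G * (2 * √(D * ∫ x in Set.Icc (0 : ℝ) 1, g x ^ 2)) := by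
        rw [mul_assoc, Real.sqrt_mul' _ (mul_nonneg hD₀ hg2_nn), Real.sqrt_sq hG]
        ring
    _ ≤ _ := sq_add_mul_two_sqrt_le (mul_nonneg (Real.sqrt_nonneg _) hG) hhel hD₀ hg2_nn hg2

/-- Let `f, f₀` be probability densities on `[0,1]` with `f₀` bounded by
`D`, and `g` bounded measurable with `|g| ≤ G` on `[0,1]`. If `h(f,f₀) · G ≤ C₁` and
`∫₀¹ g² ≤ C₂`, where `h(f,f₀) = (∫₀¹ (√f − √f₀)²)^{1/2}` is the Hellinger distance, then
`|∫₀¹ g² (f − f₀)| ≤ C₁² + C₁ √(4 C₂ D + C₁²)`. -/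
theorem hellinger_second_moment_bound
    (f f₀ g : ℝ → ℝ) (hf : Measurable f) (hf₀ : Measurable f₀) (hg : Measurable g)
    (hfpos : ∀ x ∈ Set.Icc (0 : ℝ) 1, 0 ≤ f x)
    (hf₀pos : ∀ x ∈ Set.Icc (0 : ℝ) 1, 0 ≤ f₀ x)
    (hfint : (∫ x in Set.Icc (0 : ℝ) 1, f x) = 1)
    (hf₀int : (∫ x in Set.Icc (0 : ℝ) 1, f₀ x) = 1)
    (D : ℝ) (hD : ∀ x ∈ Set.Icc (0 : ℝ) 1, f₀ x ≤ D)
    (G C₁ C₂ : ℝ) (hC₁ : 0 < C₁) (hC₂ : 0 < C₂)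
    (hgG : ∀ x ∈ Set.Icc (0 : ℝ) 1, |g x| ≤ G)
    (hhel : Real.sqrt (∫ x in Set.Icc (0 : ℝ) 1,
        (Real.sqrt (f x) - Real.sqrt (f₀ x)) ^ 2) * G ≤ C₁)
    (hg2 : (∫ x in Set.Icc (0 : ℝ) 1, (g x) ^ 2) ≤ C₂) :
    |∫ x in Set.Icc (0 : ℝ) 1, (g x) ^ 2 * (f x - f₀ x)| ≤
      C₁ ^ 2 + C₁ * Real.sqrt (4 * C₂ * D + C₁ ^ 2) :=
  hellinger_second_moment_bound_general f f₀ g hg hfpos hf₀pos hfint hf₀int D hD G C₁ C₂ hgG hhel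
    hg2
end

section
/- Let (w_l)_{l ≥ 1} and (w̄_l)_{l ≥ 1} be weight sequences with w_l ≥ 1, w̄_l ≥ 1, and l ↦ w_l/w̄_l nondecreasing with w_l/w̄_l → ∞. For J ≥ 1 let π_J : M₀(w) → M₀(w) be the projection setting to 0 all coordinates x_{l,k} with l > J. Let (Ω, 𝔽, P) be a probability space, let (μ_n) be a sequence of Markov kernels from Ω to the Borel probability measures on M₀(w), and let ν be a Borel probability measure on M₀(w) with ∫ ‖x‖_{M(w̄)} dν(x) < ∞. Assume: (i) for every fixed J ≥ 1, the real random variables ω ↦ β( μ_n(ω) ∘ π_J^{−1}, ν ∘ π_J^{−1} ) converge to 0 in P-probability as n → ∞; and (ii) the random variables ω ↦ ∫ ‖x‖_{M(w̄)} d(μ_n(ω))(x) are uniformly bounded in probability, i.e., lim_{K → ∞} sup_n P( ∫ ‖x‖_{M(w̄)} dμ_n > K ) = 0. Then β( μ_n, ν ) → 0 in P-probability as n → ∞. -/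
open MeasureTheory ProbabilityTheory Filter

/-- The index set `{(l,k) : l ≥ 1, 0 ≤ k < 2^l}` of the multiscale space (it carries the
discrete topology, as a subtype of `ℕ × ℕ`). -/
abbrev Idx : Type := {q : ℕ × ℕ // 1 ≤ q.1 ∧ q.2 < 2 ^ q.1}

/-- The multiscale space `M₀(w)`, realized (isometrically) as the space `c₀(Idx)` of
double sequences vanishing at infinity: an element `y` represents the multiscale sequence
`x` with coordinates `x_{l,k} = w l * y ⟨(l,k),_⟩`, so that
`‖x‖_{M(w)} = sup_l w_l⁻¹ max_k |x_{l,k}| = ‖y‖_∞`. Borel σ-algebra. -/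
noncomputable instance : MeasurableSpace (ZeroAtInftyContinuousMap Idx ℝ) := borel _
instance : BorelSpace (ZeroAtInftyContinuousMap Idx ℝ) := ⟨rfl⟩

/-- The bounded-Lipschitz distance between two Borel probability measures on `M₀(w)`:
`β(μ, ν) = sup { |∫ F dμ − ∫ F dν| : sup|F| + Lip(F) ≤ 1 }`. -/
noncomputable def blDist (μ ν : Measure (ZeroAtInftyContinuousMap Idx ℝ)) : ℝ :=
  sSup {r : ℝ | ∃ (F : ZeroAtInftyContinuousMap Idx ℝ → ℝ) (a : ℝ) (L : NNReal),
    a + (L : ℝ) ≤ 1 ∧ (∀ y, |F y| ≤ a) ∧ LipschitzWith L F ∧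
    r = |(∫ y, F y ∂μ) - ∫ y, F y ∂ν|}

/-- The `M(w̄)`-norm (possibly infinite) of an element of `M₀(w)`, namely
`sup_{l ≥ 1} w̄_l⁻¹ max_k |x_{l,k}|` where `x_{l,k} = w l * y ⟨(l,k),_⟩`. -/
noncomputable def normWbar (w wbar : ℕ → ℝ) (y : ZeroAtInftyContinuousMap Idx ℝ) : ENNReal :=
  ⨆ q : Idx, ENNReal.ofReal (|w q.1.1 * y q| / wbar q.1.1)

/-!
For a bounded test function `F` with `Lip(F) ≤ 1`, replacing `F` by `F ∘ π_J` changes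
`∫ F dμ` by at most `∫ ‖y - π_J y‖_{M(w)} dμ`. At a level `l > J` one has
`w_l⁻¹ |x_{l,k}| ≤ (w̄_{J+1} / w_{J+1}) ‖x‖_{M(w̄)}` since `w / w̄` is nondecreasing, so
`β(μ, ν) ≤ β(μ ∘ π_J⁻¹, ν ∘ π_J⁻¹) + (w̄_{J+1} / w_{J+1}) (∫ ‖·‖_{M(w̄)} dμ + ∫ ‖·‖_{M(w̄)} dν)`.
Off an event of small probability the `M(w̄)`-moment of `μ_n` is at most some `K`, and since
`w̄_l / w_l → 0` a single level `J` makes the error term small uniformly in `n`; what is left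
is the finite-dimensional convergence (i).
-/

open Topology

local notation "M₀" => ZeroAtInftyContinuousMap Idx ℝ

theorem ZeroAtInftyContinuousMap.dist_le_iff {α β : Type*} [TopologicalSpace α]
    [PseudoMetricSpace β] [Zero β] {f g : ZeroAtInftyContinuousMap α β} {C : ℝ} (hC : 0 ≤ C) :
    dist f g ≤ C ↔ ∀ x, dist (f x) (g x) ≤ C := by
  rw [← dist_toBCF_eq_dist]
  exact BoundedContinuousFunction.dist_le hC

theorem ofReal_abs_integral_sub_integral_comp_le {E : Type*} [PseudoMetricSpace E]
    [MeasurableSpace E] [OpensMeasurableSpace E] {σ : Measure E} [IsFiniteMeasure σ]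
    {F : E → ℝ} {a : ℝ} (hF : LipschitzWith 1 F) (hFa : ∀ y, |F y| ≤ a)
    {T : E → E} (hT : Measurable T) :
    ENNReal.ofReal |∫ y, F y ∂σ - ∫ y, F (T y) ∂σ| ≤ ∫⁻ y, edist y (T y) ∂σ := by
  have hFm : Measurable F := hF.continuous.measurable
  have hint : ∀ G : E → ℝ, Measurable G → (∀ y, |G y| ≤ a) → Integrable G σ :=
    fun G hG hGa => .of_bound hG.aestronglyMeasurable a (ae_of_all _ hGa)
  rw [← integral_sub (hint F hFm hFa) (hint (fun y => F (T y)) (hFm.comp hT) (hFa <| T ·)),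
    ← Real.enorm_eq_ofReal_abs]
  refine (enorm_integral_le_lintegral_enorm _).trans (lintegral_mono fun y => ?_)
  rw [← edist_eq_enorm_sub]
  simpa using hF.edist_le_mul y (T y)

theorem blDist_le_of_forall {μ ν : Measure M₀} {c : ℝ}
    (h : ∀ (F : M₀ → ℝ) (a : ℝ) (L : NNReal), a + L ≤ 1 → (∀ y, |F y| ≤ a) →
      LipschitzWith L F → |∫ y, F y ∂μ - ∫ y, F y ∂ν| ≤ c) :
    blDist μ ν ≤ c :=
  csSup_le ⟨0, fun _ => 0, 0, 0, by norm_num, by simp, LipschitzWith.const 0, by simp⟩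
    (by rintro r ⟨F, a, L, haL, hFa, hF, rfl⟩; exact h F a L haL hFa hF)

theorem abs_integral_sub_le_blDist {μ ν : Measure M₀} [IsProbabilityMeasure μ]
    [IsProbabilityMeasure ν] {F : M₀ → ℝ} {a : ℝ} {L : NNReal} (haL : a + L ≤ 1)
    (hFa : ∀ y, |F y| ≤ a) (hF : LipschitzWith L F) :
    |∫ y, F y ∂μ - ∫ y, F y ∂ν| ≤ blDist μ ν := by
  refine le_csSup ⟨2, ?_⟩ ⟨F, a, L, haL, hFa, hF, rfl⟩
  rintro r ⟨G, b, L', hbL, hGb, -, rfl⟩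
  have hb : b ≤ 1 := by linarith [L'.2]
  have hG : ∀ σ : Measure M₀, IsProbabilityMeasure σ → |∫ y, G y ∂σ| ≤ b := fun σ _ => by
    simpa using norm_integral_le_of_norm_le_const (μ := σ)
      (ae_of_all _ fun y => (Real.norm_eq_abs _).trans_le (hGb y))
  linarith [abs_sub (∫ y, G y ∂μ) (∫ y, G y ∂ν), hG μ ‹_›, hG ν ‹_›]

theorem blDist_le_blDist_map_add {μ ν : Measure M₀} [IsProbabilityMeasure μ]
    [IsProbabilityMeasure ν] {T : M₀ → M₀} (hT : Measurable T) {A B : ℝ} (hA : 0 ≤ A)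
    (hB : 0 ≤ B) (hμ : ∫⁻ y, edist y (T y) ∂μ ≤ ENNReal.ofReal A)
    (hν : ∫⁻ y, edist y (T y) ∂ν ≤ ENNReal.ofReal B) :
    blDist μ ν ≤ blDist (μ.map T) (ν.map T) + A + B := by
  have : IsProbabilityMeasure (μ.map T) := Measure.isProbabilityMeasure_map hT.aemeasurable
  have : IsProbabilityMeasure (ν.map T) := Measure.isProbabilityMeasure_map hT.aemeasurable
  refine blDist_le_of_forall fun F a L haL hFa hF => ?_
  have hL : (L : ℝ) ≤ 1 := by linarith [abs_nonneg (F 0), hFa 0]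
  have hF1 : LipschitzWith 1 F := hF.weaken (by exact_mod_cast hL)
  have hμT : |∫ y, F y ∂μ - ∫ y, F (T y) ∂μ| ≤ A :=
    (ENNReal.ofReal_le_ofReal_iff hA).1
      ((ofReal_abs_integral_sub_integral_comp_le hF1 hFa hT).trans hμ)
  have hνT : |∫ y, F y ∂ν - ∫ y, F (T y) ∂ν| ≤ B :=
    (ENNReal.ofReal_le_ofReal_iff hB).1
      ((ofReal_abs_integral_sub_integral_comp_le hF1 hFa hT).trans hν)
  have hmap : |∫ y, F (T y) ∂μ - ∫ y, F (T y) ∂ν| ≤ blDist (μ.map T) (ν.map T) := by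
    rw [← integral_map hT.aemeasurable hF.continuous.aestronglyMeasurable,
      ← integral_map hT.aemeasurable hF.continuous.aestronglyMeasurable]
    exact abs_integral_sub_le_blDist haL hFa hF
  linarith [abs_sub_le (∫ y, F y ∂μ) (∫ y, F (T y) ∂μ) (∫ y, F y ∂ν),
    abs_sub_le (∫ y, F (T y) ∂μ) (∫ y, F (T y) ∂ν) (∫ y, F y ∂ν),
    abs_sub_comm (∫ y, F (T y) ∂ν) (∫ y, F y ∂ν)]

section Projection

variable {π : ℕ → M₀ → M₀}

theorem lipschitzWith_one_projection
    (hπ : ∀ (J : ℕ) (y : M₀) (q : Idx), (π J y) q = if q.1.1 ≤ J then y q else 0) (J : ℕ) :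
    LipschitzWith 1 (π J) := by
  refine LipschitzWith.of_dist_le_mul fun y y' => ?_
  rw [NNReal.coe_one, one_mul, ZeroAtInftyContinuousMap.dist_le_iff dist_nonneg]
  intro q
  rw [hπ, hπ]
  split_ifs
  · exact (ZeroAtInftyContinuousMap.dist_le_iff dist_nonneg).1 le_rfl q
  · simp

theorem abs_le_weightRatio_mul {w wbar : ℕ → ℝ} (hw : ∀ l, 0 < w l) (hwbar : ∀ l, 0 < wbar l)
    (hmono : ∀ l m : ℕ, 1 ≤ l → l ≤ m → w l / wbar l ≤ w m / wbar m) {j l : ℕ} (hj : 1 ≤ j)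
    (hjl : j ≤ l) (t : ℝ) :
    |t| ≤ wbar j / w j * (|w l * t| / wbar l) := by
  have hratio : wbar l / w l ≤ wbar j / w j := by
    simpa only [inv_div] using inv_anti₀ (div_pos (hw j) (hwbar j)) (hmono j l hj hjl)
  calc |t| = wbar l / w l * (|w l * t| / wbar l) := by
        rw [abs_mul, abs_of_pos (hw l)]
        field_simp [(hw l).ne', (hwbar l).ne']
    _ ≤ wbar j / w j * (|w l * t| / wbar l) :=
        mul_le_mul_of_nonneg_right hratio (div_nonneg (abs_nonneg _) (hwbar l).le)

theorem edist_projection_le {w wbar : ℕ → ℝ} (hw : ∀ l, 0 < w l) (hwbar : ∀ l, 0 < wbar l)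
    (hmono : ∀ l m : ℕ, 1 ≤ l → l ≤ m → w l / wbar l ≤ w m / wbar m)
    (hπ : ∀ (J : ℕ) (y : M₀) (q : Idx), (π J y) q = if q.1.1 ≤ J then y q else 0)
    (J : ℕ) (y : M₀) :
    edist y (π J y) ≤ ENNReal.ofReal (wbar (J + 1) / w (J + 1)) * normWbar w wbar y := by
  have hc : 0 < wbar (J + 1) / w (J + 1) := div_pos (hwbar _) (hw _)
  rcases eq_or_ne (normWbar w wbar y) ⊤ with htop | hfin
  · simp [htop, ENNReal.mul_top, hc]
  rw [← ENNReal.ofReal_toReal hfin, ← ENNReal.ofReal_mul hc.le,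
    edist_le_ofReal (by positivity), ZeroAtInftyContinuousMap.dist_le_iff (by positivity)]
  intro q
  rw [hπ]
  split_ifs with hq
  · rw [dist_self]
    positivity
  rw [Real.dist_eq, sub_zero]
  refine (abs_le_weightRatio_mul (j := J + 1) (l := q.1.1) hw hwbar hmono (by omega) (by omega)
    (y q)).trans ?_
  gcongr
  exact (ENNReal.ofReal_le_iff_le_toReal hfin).1
    (le_iSup (fun q : Idx => ENNReal.ofReal (|w q.1.1 * y q| / wbar q.1.1)) q)

theorem blDist_le_blDist_map_projection_add {w wbar : ℕ → ℝ} (hw : ∀ l, 0 < w l)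
    (hwbar : ∀ l, 0 < wbar l)
    (hmono : ∀ l m : ℕ, 1 ≤ l → l ≤ m → w l / wbar l ≤ w m / wbar m)
    (hπ : ∀ (J : ℕ) (y : M₀) (q : Idx), (π J y) q = if q.1.1 ≤ J then y q else 0)
    (J : ℕ) {μ ν : Measure M₀} [IsProbabilityMeasure μ] [IsProbabilityMeasure ν] {K I : ℝ}
    (hK : 0 ≤ K) (hI : 0 ≤ I) (hμ : ∫⁻ y, normWbar w wbar y ∂μ ≤ ENNReal.ofReal K)
    (hν : ∫⁻ y, normWbar w wbar y ∂ν ≤ ENNReal.ofReal I) :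
    blDist μ ν ≤ blDist (μ.map (π J)) (ν.map (π J)) + wbar (J + 1) / w (J + 1) * (K + I) := by
  set c := wbar (J + 1) / w (J + 1)
  have hc : 0 ≤ c := (div_pos (hwbar _) (hw _)).le
  have htail : ∀ (σ : Measure M₀) (X : ℝ), ∫⁻ y, normWbar w wbar y ∂σ ≤ ENNReal.ofReal X →
      ∫⁻ y, edist y (π J y) ∂σ ≤ ENNReal.ofReal (c * X) := fun σ X hX =>
    calc ∫⁻ y, edist y (π J y) ∂σ ≤ ∫⁻ y, ENNReal.ofReal c * normWbar w wbar y ∂σ :=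
          lintegral_mono (edist_projection_le hw hwbar hmono hπ J)
      _ = ENNReal.ofReal c * ∫⁻ y, normWbar w wbar y ∂σ :=
          lintegral_const_mul' _ _ ENNReal.ofReal_ne_top
      _ ≤ ENNReal.ofReal (c * X) := by rw [ENNReal.ofReal_mul hc]; gcongr
  rw [mul_add, ← add_assoc]
  exact blDist_le_blDist_map_add (lipschitzWith_one_projection hπ J).continuous.measurable
    (mul_nonneg hc hK) (mul_nonneg hc hI) (htail μ K hμ) (htail ν I hν)

end Projection

theorem exists_weightRatio_mul_le {w wbar : ℕ → ℝ}
    (hinf : Tendsto (fun l => w l / wbar l) atTop atTop) (C : ℝ) {θ : ℝ} (hθ : 0 < θ) :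
    ∃ J, 1 ≤ J ∧ wbar (J + 1) / w (J + 1) * C ≤ θ := by
  have h0 : Tendsto (fun l => wbar l / w l * C) atTop (𝓝 0) := by
    simpa only [Pi.inv_apply, inv_div, zero_mul] using hinf.inv_tendsto_atTop.mul_const C
  exact ((eventually_ge_atTop 1).and
    ((h0.comp (tendsto_add_atTop_nat 1)).eventually (ge_mem_nhds hθ))).exists

theorem tendsto_measure_lt_of_forall_approx {Ω : Type*} [MeasurableSpace Ω] {P : Measure Ω}
    {X : ℕ → Ω → ℝ}
    (h : ∀ η > 0, ∀ θ > 0, ∃ (Y : ℕ → Ω → ℝ) (B : ℕ → Set Ω),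
      (∀ n, P (B n) ≤ ENNReal.ofReal η) ∧
      (∀ ε > 0, Tendsto (fun n => P {ω | ε < Y n ω}) atTop (𝓝 0)) ∧
      ∀ n, ∀ ω ∉ B n, X n ω ≤ Y n ω + θ)
    (ε : ℝ) (hε : 0 < ε) :
    Tendsto (fun n => P {ω | ε < X n ω}) atTop (𝓝 0) := by
  rw [ENNReal.tendsto_nhds_zero]
  intro δ hδ
  obtain ⟨r, -, hr0, hrδ⟩ := ENNReal.lt_iff_exists_real_btwn.1 hδ
  have hr : 0 < r := ENNReal.ofReal_pos.1 hr0
  obtain ⟨Y, B, hB, hY, hXY⟩ := h (r / 2) (half_pos hr) (ε / 2) (half_pos hε)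
  filter_upwards [(hY (ε / 2) (half_pos hε)).eventually
    (ge_mem_nhds (ENNReal.ofReal_pos.2 (half_pos hr)))] with n hn
  have hsub : {ω | ε < X n ω} ⊆ {ω | ε / 2 < Y n ω} ∪ B n := fun ω hω => by
    by_contra hc
    simp only [Set.mem_union, Set.mem_ofPred_eq, not_or, not_lt] at hω hc
    linarith [hXY n ω hc.2]
  calc P {ω | ε < X n ω} ≤ P {ω | ε / 2 < Y n ω} + P (B n) :=
        (measure_mono hsub).trans (measure_union_le _ _)
    _ ≤ ENNReal.ofReal (r / 2) + ENNReal.ofReal (r / 2) := add_le_add hn (hB n)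
    _ = ENNReal.ofReal r := by rw [← ENNReal.ofReal_add (by positivity) (by positivity), add_halves]
    _ ≤ δ := hrδ.le

theorem tightness_criterion_M0_general
    (w wbar : ℕ → ℝ) (hw1 : ∀ l, 1 ≤ w l) (hwbar1 : ∀ l, 1 ≤ wbar l)
    (hmono : ∀ l m : ℕ, 1 ≤ l → l ≤ m → w l / wbar l ≤ w m / wbar m)
    (hinf : Tendsto (fun l : ℕ => w l / wbar l) atTop atTop)
    (π : ℕ → ZeroAtInftyContinuousMap Idx ℝ → ZeroAtInftyContinuousMap Idx ℝ)
    (hπ : ∀ (J : ℕ) (y : ZeroAtInftyContinuousMap Idx ℝ) (q : Idx),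
      (π J y) q = if q.1.1 ≤ J then y q else 0)
    {Ω : Type*} [MeasurableSpace Ω] (P : Measure Ω)
    (κ : ℕ → Kernel Ω (ZeroAtInftyContinuousMap Idx ℝ))
    (hκ : ∀ n, IsMarkovKernel (κ n))
    (ν : Measure (ZeroAtInftyContinuousMap Idx ℝ)) (hν : IsProbabilityMeasure ν)
    (hνint : (∫⁻ y, normWbar w wbar y ∂ν) < ⊤)
    (hfidi : ∀ J : ℕ, 1 ≤ J → ∀ ε : ℝ, 0 < ε →
      Tendsto (fun n : ℕ =>
          P {ω | ε < blDist (Measure.map (π J) ((κ n) ω)) (Measure.map (π J) ν)})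
        atTop (nhds 0))
    (hbdd : ∀ ε : ℝ, 0 < ε → ∃ K : ℝ, ∀ n : ℕ,
      P {ω | ENNReal.ofReal K < ∫⁻ y, normWbar w wbar y ∂((κ n) ω)} ≤ ENNReal.ofReal ε) :
    ∀ ε : ℝ, 0 < ε →
      Tendsto (fun n : ℕ => P {ω | ε < blDist ((κ n) ω) ν}) atTop (nhds 0) := by
  have hw : ∀ l, 0 < w l := fun l => one_pos.trans_le (hw1 l)
  have hwbar : ∀ l, 0 < wbar l := fun l => one_pos.trans_le (hwbar1 l)
  refine tendsto_measure_lt_of_forall_approx fun η hη θ hθ => ?_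
  obtain ⟨K, hK⟩ := hbdd η hη
  set Iν := (∫⁻ y, normWbar w wbar y ∂ν).toReal
  obtain ⟨J, hJ, hJθ⟩ := exists_weightRatio_mul_le hinf (max K 0 + Iν) hθ
  refine ⟨fun n ω => blDist (Measure.map (π J) ((κ n) ω)) (Measure.map (π J) ν),
    fun n => {ω | ENNReal.ofReal K < ∫⁻ y, normWbar w wbar y ∂((κ n) ω)}, hK, hfidi J hJ,
    fun n ω hω => ?_⟩
  have hμK : ∫⁻ y, normWbar w wbar y ∂((κ n) ω) ≤ ENNReal.ofReal (max K 0) :=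
    (not_lt.1 hω).trans (ENNReal.ofReal_le_ofReal (le_max_left K 0))
  have hνI : ∫⁻ y, normWbar w wbar y ∂ν ≤ ENNReal.ofReal Iν :=
    (ENNReal.ofReal_toReal hνint.ne).ge
  calc blDist ((κ n) ω) ν
      ≤ blDist (Measure.map (π J) ((κ n) ω)) (Measure.map (π J) ν)
          + wbar (J + 1) / w (J + 1) * (max K 0 + Iν) :=
        blDist_le_blDist_map_projection_add hw hwbar hmono hπ J (le_max_right K 0)
          ENNReal.toReal_nonneg hμK hνI
    _ ≤ _ := by gcongr

/-- Proposition 4, the tightness criterion. Let `w, w̄` be weights with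
`w_l, w̄_l ≥ 1` and `l ↦ w_l/w̄_l` nondecreasing and tending to `∞`. Let `π J` be the
projection of `M₀(w)` killing all coordinates at levels `l > J`, let `(κ n)` be Markov
kernels from `Ω` to `M₀(w)` and `ν` a Borel probability measure on `M₀(w)` with
`∫ ‖x‖_{M(w̄)} dν < ∞`. If (i) the finite-dimensional projections of `κ n` converge to
those of `ν` in the bounded-Lipschitz distance, in `P`-probability, and (ii) the random
variables `∫ ‖x‖_{M(w̄)} d(κ n ω)` are uniformly bounded in probability, then
`β(κ n ·, ν) → 0` in `P`-probability. -/
theorem tightness_criterion_M0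
    (w wbar : ℕ → ℝ) (hw1 : ∀ l, 1 ≤ w l) (hwbar1 : ∀ l, 1 ≤ wbar l)
    (hmono : ∀ l m : ℕ, 1 ≤ l → l ≤ m → w l / wbar l ≤ w m / wbar m)
    (hinf : Tendsto (fun l : ℕ => w l / wbar l) atTop atTop)
    (π : ℕ → ZeroAtInftyContinuousMap Idx ℝ → ZeroAtInftyContinuousMap Idx ℝ)
    (hπ : ∀ (J : ℕ) (y : ZeroAtInftyContinuousMap Idx ℝ) (q : Idx),
      (π J y) q = if q.1.1 ≤ J then y q else 0)
    {Ω : Type*} [MeasurableSpace Ω] (P : Measure Ω) [IsProbabilityMeasure P]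
    (κ : ℕ → Kernel Ω (ZeroAtInftyContinuousMap Idx ℝ))
    (hκ : ∀ n, IsMarkovKernel (κ n))
    (ν : Measure (ZeroAtInftyContinuousMap Idx ℝ)) (hν : IsProbabilityMeasure ν)
    (hνint : (∫⁻ y, normWbar w wbar y ∂ν) < ⊤)
    (hfidi : ∀ J : ℕ, 1 ≤ J → ∀ ε : ℝ, 0 < ε →
      Tendsto (fun n : ℕ =>
          P {ω | ε < blDist (Measure.map (π J) ((κ n) ω)) (Measure.map (π J) ν)})
        atTop (nhds 0))
    (hbdd : ∀ ε : ℝ, 0 < ε → ∃ K : ℝ, ∀ n : ℕ,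
      P {ω | ENNReal.ofReal K < ∫⁻ y, normWbar w wbar y ∂((κ n) ω)} ≤ ENNReal.ofReal ε) :
    ∀ ε : ℝ, 0 < ε →
      Tendsto (fun n : ℕ => P {ω | ε < blDist ((κ n) ω) ν}) atTop (nhds 0) :=
  tightness_criterion_M0_general w wbar hw1 hwbar1 hmono hinf π hπ P κ hκ ν hν hνint hfidi hbdd
end

section
/- Let 0 < ρ₀ ≤ D₀ < ∞ and let f₀ be a probability density on [0,1] with ρ₀ ≤ f₀(x) ≤ D₀ for all x. Let m > 0, n ≥ 1, and a_n > 0 with n a_n² ≥ 1. Let (Θ, 𝒜) be a measurable space, Π_n a probability measure on Θ, and θ ↦ f_θ a map such that (θ, x) ↦ f_θ(x) is jointly measurable, each f_θ is a probability density on [0,1], and h(f_θ, f₀) ≤ a_n for Π_n-almost every θ. Let γ : [0,1] → ℝ be bounded measurable, and set γ̃ = γ − ∫₀¹ γ f₀. Assume ∫₀¹ γ̃² f₀ ≤ m² and ‖γ̃‖_∞ ≤ ( 4 a_n log(n + 1) )^{−1}. Then there exists C > 0 depending only on m and D₀ such that for every x_1, …, x_n ∈ [0,1] and every real t with |t| ≤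 log n: ∫_Θ exp( t √n ∫₀¹ (f_θ − f₀) γ ) · ( Π_{i=1}^n f_θ(x_i) / f₀(x_i) ) dΠ_n(θ) ≤ exp( C t² + t W_n ) · ∫_Θ ( Π_{i=1}^n f_{θ,t}(x_i) / f₀(x_i) ) dΠ_n(θ), where W_n = n^{−1/2} Σ_{i=1}^n γ̃(x_i) and f_{θ,t} := f_θ e^{−t γ̃ / √n} / ∫₀¹ f_θ e^{−t γ̃ / √n}. -/
open MeasureTheory

lemma exp_neg_le_quad {u : ℝ} (hu : -(4⁻¹ : ℝ) ≤ u) :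
    Real.exp (-u) ≤ 1 - u + (4/3) * u ^ 2 := by
  have h1 : (0:ℝ) < 1 + u := by linarith
  have h2 : 1 + u ≤ Real.exp u := by linarith [Real.add_one_le_exp u]
  have h3 : Real.exp (-u) ≤ (1 + u)⁻¹ := by
    rw [Real.exp_neg]
    exact inv_anti₀ h1 h2
  refine h3.trans ?_
  rw [inv_le_iff_one_le_mul₀ h1]
  nlinarith [sq_nonneg u]

lemma my_integrableOn {g : ℝ → ℝ} {s : Set ℝ} (h : (∫ x in s, g x) = 1) :
    IntegrableOn g s := by
  by_contra hc
  rw [MeasureTheory.integral_undef hc] at h; norm_num at h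

lemma int_mul_bdd {g b : ℝ → ℝ} {s : Set ℝ} (hs : MeasurableSet s)
    (hg : IntegrableOn g s) (hb : Measurable b) {c : ℝ}
    (hc : ∀ y ∈ s, |b y| ≤ c) : IntegrableOn (fun y => g y * b y) s := by
  have := hg.bdd_mul (hb.aestronglyMeasurable) (c := c)
    (ae_restrict_of_forall_mem hs (fun y hy => by simpa using hc y hy))
  exact this.congr (Filter.Eventually.of_forall fun y => mul_comm _ _)
lemma ptwise_hell (p q g a B : ℝ) (hp : 0 ≤ p) (hq : 0 ≤ q) (hg : 0 ≤ g)
    (hgB : g ≤ B) (ha : 0 < a) :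
    (p^2 - q^2) * g^2 ≤ B*B*(p-q)^2 + B*a⁻¹*(p-q)^2 + B*a*(q^2*g^2) := by
  have hB : 0 ≤ B := hg.trans hgB
  have hk : 0 < a⁻¹ := inv_pos.mpr ha
  rcases le_total p q with hpq | hpq
  · have h0 : (p^2 - q^2) * g^2 ≤ 0 := by
      nlinarith [sq_nonneg g, mul_self_le_mul_self hp hpq]
    have : 0 ≤ B*B*(p-q)^2 + B*a⁻¹*(p-q)^2 + B*a*(q^2*g^2) := by positivity
    linarith
  · have hg2 : g^2 ≤ B^2 := by nlinarith [mul_self_le_mul_self hg hgB]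
    have h2 : (p-q)^2 * g^2 ≤ (p-q)^2 * B^2 :=
      mul_le_mul_of_nonneg_left hg2 (sq_nonneg _)
    have h3 : a*(2*q*(p-q)*g) ≤ (p-q)^2 + a^2*(q^2*g^2) := by
      nlinarith [sq_nonneg (p - q - a*q*g)]
    have h4 : 2*q*(p-q)*g ≤ a⁻¹*(p-q)^2 + a*(q^2*g^2) := by
      have := mul_le_mul_of_nonneg_left h3 hk.le
      have hak : a⁻¹ * a = 1 := inv_mul_cancel₀ ha.ne'
      nlinarith
    have hnn : 0 ≤ 2*q*(p-q)*g := by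
      have : 0 ≤ p - q := by linarith
      positivity
    have h5 : 2*q*(p-q)*g^2 ≤ B*(2*q*(p-q)*g) := by
      nlinarith [mul_le_mul_of_nonneg_left hgB hnn]
    have h6 : B*(2*q*(p-q)*g) ≤ B*(a⁻¹*(p-q)^2 + a*(q^2*g^2)) :=
      mul_le_mul_of_nonneg_left h4 hB
    nlinarith

lemma Zlb (t : ℝ) (n : ℕ) (F γt : ℝ → ℝ)
    (hF0 : ∀ y ∈ Set.Icc (0:ℝ) 1, 0 ≤ F y)
    (hFint : (∫ y in Set.Icc (0:ℝ) 1, F y) = 1)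
    (hγtm : Measurable γt)
    (hub : ∀ y ∈ Set.Icc (0:ℝ) 1, |t * γt y / Real.sqrt n| ≤ 4⁻¹) :
    Real.exp (-(4⁻¹:ℝ)) ≤ ∫ y in Set.Icc (0:ℝ) 1, F y * Real.exp (-t * γt y / Real.sqrt n) := by
  have hImeas : MeasurableSet (Set.Icc (0:ℝ) 1) := measurableSet_Icc
  have hIF : IntegrableOn F (Set.Icc (0:ℝ) 1) := my_integrableOn hFint
  have hbm : Measurable fun y => Real.exp (-t * γt y / Real.sqrt n) :=
    ((hγtm.const_mul (-t)).div_const _).exp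
  have hbb : ∀ y ∈ Set.Icc (0:ℝ) 1, |Real.exp (-t * γt y / Real.sqrt n)| ≤ Real.exp 4⁻¹ := by
    intro y hy
    rw [abs_of_pos (Real.exp_pos _)]
    apply Real.exp_le_exp.mpr
    have h := abs_le.mp (hub y hy)
    have : -t * γt y / Real.sqrt n = -(t * γt y / Real.sqrt n) := by ring
    rw [this]; linarith [h.1]
  have hIZ : IntegrableOn (fun y => F y * Real.exp (-t * γt y / Real.sqrt n))
      (Set.Icc (0:ℝ) 1) := int_mul_bdd hImeas hIF hbm hbb
  have hptw : ∀ y ∈ Set.Icc (0:ℝ) 1,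
      F y * Real.exp (-(4⁻¹:ℝ)) ≤ F y * Real.exp (-t * γt y / Real.sqrt n) := by
    intro y hy
    apply mul_le_mul_of_nonneg_left _ (hF0 y hy)
    apply Real.exp_le_exp.mpr
    have h := abs_le.mp (hub y hy)
    have : -t * γt y / Real.sqrt n = -(t * γt y / Real.sqrt n) := by ring
    rw [this]; linarith [h.2]
  have := setIntegral_mono_on (hIF.mul_const _) hIZ hImeas hptw
  rwa [integral_mul_const, hFint, one_mul] at this

set_option maxHeartbeats 2000000 in
lemma key_bound (m a t : ℝ) (n : ℕ) (f₀ F γ γt : ℝ → ℝ)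
    (hm : 0 < m) (ha : 0 < a) (hn1 : (1:ℝ) ≤ (n:ℝ))
    (hf₀m : Measurable f₀) (hf₀nn : ∀ y ∈ Set.Icc (0:ℝ) 1, 0 ≤ f₀ y)
    (hf₀int : (∫ y in Set.Icc (0:ℝ) 1, f₀ y) = 1)
    (hFm : Measurable F) (hF0 : ∀ y ∈ Set.Icc (0:ℝ) 1, 0 ≤ F y)
    (hFint : (∫ y in Set.Icc (0:ℝ) 1, F y) = 1)
    (hγm : Measurable γ) (G : ℝ) (hG : ∀ y ∈ Set.Icc (0:ℝ) 1, |γ y| ≤ G)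
    (hγtdef : γt = fun y => γ y - ∫ z in Set.Icc (0:ℝ) 1, γ z * f₀ z)
    (hγtm2 : (∫ y in Set.Icc (0:ℝ) 1, γt y ^ 2 * f₀ y) ≤ m^2)
    (B : ℝ) (hBpos : 0 < B) (hγtB : ∀ y ∈ Set.Icc (0:ℝ) 1, |γt y| ≤ B)
    (hBa : B * a ≤ 2⁻¹)
    (hub : ∀ y ∈ Set.Icc (0:ℝ) 1, |t * γt y / Real.sqrt n| ≤ 4⁻¹)
    (hHell : (∫ y in Set.Icc (0:ℝ) 1, (Real.sqrt (F y) - Real.sqrt (f₀ y))^2) ≤ a^2) :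
    Real.exp (t * Real.sqrt n * ∫ y in Set.Icc (0:ℝ) 1, (F y - f₀ y) * γ y) *
      (∫ y in Set.Icc (0:ℝ) 1, F y * Real.exp (-t * γt y / Real.sqrt n)) ^ n ≤
    Real.exp ((4*m^2+2) * t^2) := by
  have hImeas : MeasurableSet (Set.Icc (0:ℝ) 1) := measurableSet_Icc
  have hnpos : (0:ℝ) < (n:ℝ) := by linarith
  have hs : (0:ℝ) < Real.sqrt n := Real.sqrt_pos.mpr hnpos
  have hss : Real.sqrt n * Real.sqrt n = (n:ℝ) := Real.mul_self_sqrt hnpos.le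
  have hγtm : Measurable γt := by rw [hγtdef]; exact hγm.sub measurable_const
  have hIF : IntegrableOn F (Set.Icc (0:ℝ) 1) := my_integrableOn hFint
  have hIf₀ : IntegrableOn f₀ (Set.Icc (0:ℝ) 1) := my_integrableOn hf₀int
  have hIFγ : IntegrableOn (fun y => F y * γ y) _ := int_mul_bdd hImeas hIF hγm hG
  have hIf₀γ : IntegrableOn (fun y => f₀ y * γ y) _ := int_mul_bdd hImeas hIf₀ hγm hG
  have hIFγt : IntegrableOn (fun y => F y * γt y) _ := int_mul_bdd hImeas hIF hγtm hγtB
  have hγt2b : ∀ y ∈ Set.Icc (0:ℝ) 1, |γt y ^ 2| ≤ B^2 := by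
    intro y hy
    rw [abs_of_nonneg (sq_nonneg _), ← sq_abs]
    exact pow_le_pow_left₀ (abs_nonneg _) (hγtB y hy) 2
  have hIFγt2 : IntegrableOn (fun y => F y * γt y ^ 2) _ :=
    int_mul_bdd hImeas hIF (hγtm.pow_const 2) hγt2b
  have hIf₀γt2 : IntegrableOn (fun y => f₀ y * γt y ^ 2) _ :=
    int_mul_bdd hImeas hIf₀ (hγtm.pow_const 2) hγt2b
  have hIHell : IntegrableOn (fun y => (Real.sqrt (F y) - Real.sqrt (f₀ y))^2)
      (Set.Icc (0:ℝ) 1) := by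
    apply Integrable.mono' (hIF.add hIf₀)
    · exact ((((Real.continuous_sqrt.measurable.comp hFm)).sub
        (Real.continuous_sqrt.measurable.comp hf₀m)).pow_const 2).aestronglyMeasurable
    · apply ae_restrict_of_forall_mem hImeas
      intro y hy
      rw [Real.norm_eq_abs, abs_of_nonneg (sq_nonneg _), Pi.add_apply]
      have e1 : Real.sqrt (F y) ^ 2 = F y := Real.sq_sqrt (hF0 y hy)
      have e2 : Real.sqrt (f₀ y) ^ 2 = f₀ y := Real.sq_sqrt (hf₀nn y hy)
      nlinarith [mul_nonneg (Real.sqrt_nonneg (F y)) (Real.sqrt_nonneg (f₀ y))]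
  -- abbreviations as plain equalities
  set H := ∫ y in Set.Icc (0:ℝ) 1, (Real.sqrt (F y) - Real.sqrt (f₀ y))^2 with hH
  set M := ∫ y in Set.Icc (0:ℝ) 1, f₀ y * γt y ^ 2 with hMdef
  set S := ∫ y in Set.Icc (0:ℝ) 1, F y * γt y ^ 2 with hSdef
  have hHnn : 0 ≤ H := setIntegral_nonneg hImeas fun y _ => sq_nonneg _
  have hMnn : 0 ≤ M := setIntegral_nonneg hImeas fun y hy =>
    mul_nonneg (hf₀nn y hy) (sq_nonneg _)
  have hM : M ≤ m^2 := by
    have e : (fun y => f₀ y * γt y ^ 2) = (fun y => γt y ^ 2 * f₀ y) := by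
      funext y; ring
    rw [hMdef, e]; exact hγtm2
  -- bound on S
  have hdiff : (∫ y in Set.Icc (0:ℝ) 1, (F y - f₀ y) * γt y ^ 2) ≤ m^2 + 1 := by
    have hptw : ∀ y ∈ Set.Icc (0:ℝ) 1, (F y - f₀ y) * γt y ^ 2 ≤
        B*B*(Real.sqrt (F y) - Real.sqrt (f₀ y))^2 +
        B*a⁻¹*(Real.sqrt (F y) - Real.sqrt (f₀ y))^2 + B*a*(f₀ y * γt y ^ 2) := by
      intro y hy
      have e1 : Real.sqrt (F y) ^ 2 = F y := Real.sq_sqrt (hF0 y hy)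
      have e2 : Real.sqrt (f₀ y) ^ 2 = f₀ y := Real.sq_sqrt (hf₀nn y hy)
      have := ptwise_hell (Real.sqrt (F y)) (Real.sqrt (f₀ y)) |γt y| a B
        (Real.sqrt_nonneg _) (Real.sqrt_nonneg _) (abs_nonneg _) (hγtB y hy) ha
      rw [e1, e2, sq_abs] at this
      linarith
    have hint1 : IntegrableOn (fun y => (F y - f₀ y) * γt y ^ 2) _ :=
      int_mul_bdd hImeas (hIF.sub hIf₀) (hγtm.pow_const 2) hγt2b
    have hintA : IntegrableOn (fun y => B*B*(Real.sqrt (F y) - Real.sqrt (f₀ y))^2)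
        (Set.Icc (0:ℝ) 1) := hIHell.const_mul _
    have hintB : IntegrableOn (fun y => B*a⁻¹*(Real.sqrt (F y) - Real.sqrt (f₀ y))^2)
        (Set.Icc (0:ℝ) 1) := hIHell.const_mul _
    have hintC : IntegrableOn (fun y => B*a*(f₀ y * γt y ^ 2)) (Set.Icc (0:ℝ) 1) :=
      hIf₀γt2.const_mul _
    have hintAB : IntegrableOn (fun y => B*B*(Real.sqrt (F y) - Real.sqrt (f₀ y))^2 +
        B*a⁻¹*(Real.sqrt (F y) - Real.sqrt (f₀ y))^2) (Set.Icc (0:ℝ) 1) := hintA.add hintB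
    have hint2 : IntegrableOn (fun y =>
        B*B*(Real.sqrt (F y) - Real.sqrt (f₀ y))^2 +
        B*a⁻¹*(Real.sqrt (F y) - Real.sqrt (f₀ y))^2 + B*a*(f₀ y * γt y ^ 2)) _ :=
      hintAB.add hintC
    have hle := setIntegral_mono_on hint1 hint2 hImeas hptw
    rw [integral_add hintAB hintC, integral_add hintA hintB,
      integral_const_mul _ _, integral_const_mul _ _, integral_const_mul _ _] at hle
    have c1 : B*B*H ≤ 4⁻¹ := by
      nlinarith [mul_le_mul_of_nonneg_left hHell (mul_nonneg hBpos.le hBpos.le),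
        mul_nonneg hBpos.le ha.le]
    have c2 : B*a⁻¹*H ≤ 2⁻¹ := by
      have h1 : B*a⁻¹*H ≤ B*a⁻¹*a^2 :=
        mul_le_mul_of_nonneg_left hHell (by positivity)
      have h2 : B*a⁻¹*a^2 = B*a := by field_simp
      linarith
    have c3 : B*a*M ≤ 2⁻¹*m^2 := by
      nlinarith [mul_nonneg hBpos.le ha.le]
    nlinarith [hle]
  have hSM : S - M = ∫ y in Set.Icc (0:ℝ) 1, (F y - f₀ y) * γt y ^ 2 := by
    rw [hSdef, hMdef, ← integral_sub hIFγt2 hIf₀γt2]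
    congr 1; funext y; ring
  have hSb : S ≤ 2*m^2 + 1 := by linarith
  -- Z expansion
  set Z := ∫ y in Set.Icc (0:ℝ) 1, F y * Real.exp (-t * γt y / Real.sqrt n) with hZdef
  set Gf := ∫ y in Set.Icc (0:ℝ) 1, F y * γt y with hGfdef
  have hbm : Measurable fun y => Real.exp (-t * γt y / Real.sqrt n) :=
    ((hγtm.const_mul (-t)).div_const _).exp
  have hbb : ∀ y ∈ Set.Icc (0:ℝ) 1, |Real.exp (-t * γt y / Real.sqrt n)| ≤ Real.exp 4⁻¹ := by
    intro y hy
    rw [abs_of_pos (Real.exp_pos _)]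
    apply Real.exp_le_exp.mpr
    have h := abs_le.mp (hub y hy)
    have : -t * γt y / Real.sqrt n = -(t * γt y / Real.sqrt n) := by ring
    rw [this]; linarith [h.1]
  have hIZ : IntegrableOn (fun y => F y * Real.exp (-t * γt y / Real.sqrt n))
      (Set.Icc (0:ℝ) 1) := int_mul_bdd hImeas hIF hbm hbb
  have hZnn : 0 ≤ Z := setIntegral_nonneg hImeas fun y hy =>
    mul_nonneg (hF0 y hy) (Real.exp_pos _).le
  have hZub : Z ≤ 1 - Gf * (t / Real.sqrt n) + S * (4/3 * (t^2 / n)) := by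
    have hptw : ∀ y ∈ Set.Icc (0:ℝ) 1, F y * Real.exp (-t * γt y / Real.sqrt n) ≤
        F y - F y * γt y * (t / Real.sqrt n) + F y * γt y ^ 2 * (4/3 * (t^2 / n)) := by
      intro y hy
      have h := abs_le.mp (hub y hy)
      have h1 : Real.exp (-(t * γt y / Real.sqrt n)) ≤
          1 - t * γt y / Real.sqrt n + 4/3 * (t * γt y / Real.sqrt n)^2 :=
        exp_neg_le_quad (by linarith [h.1])
      have h2 := mul_le_mul_of_nonneg_left h1 (hF0 y hy)
      have e0 : -t * γt y / Real.sqrt n = -(t * γt y / Real.sqrt n) := by ring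
      have e : (t * γt y / Real.sqrt n)^2 = γt y ^ 2 * (t^2 / (n:ℝ)) := by
        rw [div_pow, mul_pow, show Real.sqrt n ^ 2 = (n:ℝ) from Real.sq_sqrt hnpos.le]
        ring
      calc F y * Real.exp (-t * γt y / Real.sqrt n)
          = F y * Real.exp (-(t * γt y / Real.sqrt n)) := by rw [e0]
        _ ≤ F y * (1 - t * γt y / Real.sqrt n + 4/3 * (t * γt y / Real.sqrt n)^2) := h2
        _ = F y - F y * γt y * (t / Real.sqrt n) + F y * γt y ^ 2 * (4/3 * (t^2 / n)) := by
            rw [e]; ring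
    have hintP : IntegrableOn (fun y => F y * γt y * (t / Real.sqrt n)) (Set.Icc (0:ℝ) 1) :=
      hIFγt.mul_const _
    have hintQ : IntegrableOn (fun y => F y * γt y ^ 2 * (4/3 * (t^2 / n))) (Set.Icc (0:ℝ) 1) :=
      hIFγt2.mul_const _
    have hintPQ : IntegrableOn (fun y => F y - F y * γt y * (t / Real.sqrt n))
        (Set.Icc (0:ℝ) 1) := hIF.sub hintP
    have hint2 : IntegrableOn (fun y =>
        F y - F y * γt y * (t / Real.sqrt n) + F y * γt y ^ 2 * (4/3 * (t^2 / n))) _ :=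
      hintPQ.add hintQ
    have hle := setIntegral_mono_on hIZ hint2 hImeas hptw
    rwa [integral_add hintPQ hintQ, integral_sub hIF hintP,
      integral_mul_const, integral_mul_const, hFint] at hle
  have hZpow : Z ^ n ≤ Real.exp ((n:ℝ) * (-Gf * (t / Real.sqrt n) + S * (4/3 * (t^2 / n)))) := by
    have h1 : Z ≤ Real.exp (-Gf * (t / Real.sqrt n) + S * (4/3 * (t^2 / n))) := by
      have := Real.add_one_le_exp (-Gf * (t / Real.sqrt n) + S * (4/3 * (t^2 / n)))
      linarith
    calc Z ^ n ≤ Real.exp (-Gf * (t / Real.sqrt n) + S * (4/3 * (t^2 / n))) ^ n :=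
          pow_le_pow_left₀ hZnn h1 n
      _ = Real.exp ((n:ℝ) * (-Gf * (t / Real.sqrt n) + S * (4/3 * (t^2 / n)))) :=
          (Real.exp_nat_mul _ n).symm
  -- γ integral identity
  have hDG : (∫ y in Set.Icc (0:ℝ) 1, (F y - f₀ y) * γ y) = Gf := by
    have e1 : (∫ y in Set.Icc (0:ℝ) 1, (F y - f₀ y) * γ y)
        = (∫ y in Set.Icc (0:ℝ) 1, F y * γ y) - ∫ y in Set.Icc (0:ℝ) 1, f₀ y * γ y := by
      rw [← integral_sub hIFγ hIf₀γ]; congr 1; funext y; ring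
    have e2 : Gf = (∫ y in Set.Icc (0:ℝ) 1, F y * γ y)
        - ∫ z in Set.Icc (0:ℝ) 1, γ z * f₀ z := by
      rw [hGfdef]
      simp only [hγtdef]
      rw [show (fun y => F y * (γ y - ∫ z in Set.Icc (0:ℝ) 1, γ z * f₀ z))
          = fun y => F y * γ y - F y * (∫ z in Set.Icc (0:ℝ) 1, γ z * f₀ z) from
          funext fun y => by ring]
      rw [integral_sub hIFγ (hIF.mul_const _), integral_mul_const, hFint, one_mul]
    have e3 : (∫ y in Set.Icc (0:ℝ) 1, f₀ y * γ y) = ∫ z in Set.Icc (0:ℝ) 1, γ z * f₀ z := by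
      rw [show (fun y => f₀ y * γ y) = fun y => γ y * f₀ y from funext fun y => mul_comm _ _]
    rw [e1, e2, e3]
  -- combine
  have hcomb : t * Real.sqrt n * (∫ y in Set.Icc (0:ℝ) 1, (F y - f₀ y) * γ y)
      + (n:ℝ) * (-Gf * (t / Real.sqrt n) + S * (4/3 * (t^2 / n))) = S * (4/3 * t^2) := by
    rw [hDG]
    have e1 : (n:ℝ) * (Gf * (t / Real.sqrt n)) = Gf * (t * Real.sqrt n) := by
      have hds : (n:ℝ) / Real.sqrt n = Real.sqrt n := by
        rw [div_eq_iff hs.ne']; exact hss.symm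
      calc (n:ℝ) * (Gf * (t / Real.sqrt n)) = Gf * t * ((n:ℝ) / Real.sqrt n) := by ring
        _ = Gf * (t * Real.sqrt n) := by rw [hds]; ring
    have e2 : (n:ℝ) * (S * (4/3 * (t^2 / n))) = S * (4/3 * t^2) := by
      field_simp
    linear_combination e2 - e1
  calc Real.exp (t * Real.sqrt n * ∫ y in Set.Icc (0:ℝ) 1, (F y - f₀ y) * γ y) * Z ^ n
      ≤ Real.exp (t * Real.sqrt n * ∫ y in Set.Icc (0:ℝ) 1, (F y - f₀ y) * γ y) *
        Real.exp ((n:ℝ) * (-Gf * (t / Real.sqrt n) + S * (4/3 * (t^2 / n)))) :=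
        mul_le_mul_of_nonneg_left hZpow (Real.exp_pos _).le
    _ = Real.exp (S * (4/3 * t^2)) := by rw [← Real.exp_add, hcomb]
    _ ≤ Real.exp ((4*m^2+2) * t^2) := by
        apply Real.exp_le_exp.mpr
        nlinarith [mul_le_mul_of_nonneg_right hSb (by positivity : (0:ℝ) ≤ 4/3 * t^2),
          sq_nonneg t, sq_nonneg (m*t)]

set_option maxHeartbeats 2000000 in
/-- Lemma 1 of the paper. Exponential-moment bound for semiparametric
functionals of the posterior. Here densities on `[0,1]` are nonnegative measurable
functions integrating to `1` over `[0,1]`, the Hellinger distance is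
`h(f,g) = (∫₀¹ (√f − √g)²)^{1/2}`, `γ̃ = γ − ∫₀¹ γ f₀`, `W_n = n^{−1/2} Σ_i γ̃(x_i)` and
`f_{θ,t} = f_θ e^{−t γ̃/√n} / ∫₀¹ f_θ e^{−t γ̃/√n}`. The integrals over `Θ` are taken as
lower (`∫⁻`) integrals of the nonnegative integrands. -/
theorem posterior_laplace_transform_bound (D₀ m : ℝ) (hD₀ : 0 < D₀) (hm : 0 < m) :
    ∃ C : ℝ, 0 < C ∧
      ∀ (ρ₀ : ℝ), 0 < ρ₀ → ρ₀ ≤ D₀ →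
      ∀ f₀ : ℝ → ℝ, Measurable f₀ →
      (∀ x ∈ Set.Icc (0 : ℝ) 1, ρ₀ ≤ f₀ x ∧ f₀ x ≤ D₀) →
      (∫ x in Set.Icc (0 : ℝ) 1, f₀ x) = 1 →
      ∀ n : ℕ, 1 ≤ n →
      ∀ a : ℝ, 0 < a → 1 ≤ (n : ℝ) * a ^ 2 →
      ∀ (Θ : Type) (_ : MeasurableSpace Θ) (Prn : Measure Θ), IsProbabilityMeasure Prn →
      ∀ fθ : Θ → ℝ → ℝ, Measurable (Function.uncurry fθ) →
      (∀ θ, ∀ x ∈ Set.Icc (0 : ℝ) 1, 0 ≤ fθ θ x) →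
      (∀ θ, (∫ x in Set.Icc (0 : ℝ) 1, fθ θ x) = 1) →
      (∀ᵐ θ ∂Prn, Real.sqrt (∫ x in Set.Icc (0 : ℝ) 1,
          (Real.sqrt (fθ θ x) - Real.sqrt (f₀ x)) ^ 2) ≤ a) →
      ∀ γ : ℝ → ℝ, Measurable γ → (∃ G : ℝ, ∀ x ∈ Set.Icc (0 : ℝ) 1, |γ x| ≤ G) →
      ∀ γt : ℝ → ℝ,
        γt = (fun x => γ x - ∫ z in Set.Icc (0 : ℝ) 1, γ z * f₀ z) →
      (∫ x in Set.Icc (0 : ℝ) 1, γt x ^ 2 * f₀ x) ≤ m ^ 2 →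
      (∀ x ∈ Set.Icc (0 : ℝ) 1, |γt x| ≤ (4 * a * Real.log ((n : ℝ) + 1))⁻¹) →
      ∀ x : Fin n → ℝ, (∀ i, x i ∈ Set.Icc (0 : ℝ) 1) →
      ∀ t : ℝ, |t| ≤ Real.log n →
        (∫⁻ θ, ENNReal.ofReal
            (Real.exp (t * Real.sqrt n *
                ∫ u in Set.Icc (0 : ℝ) 1, (fθ θ u - f₀ u) * γ u) *
              ∏ i, fθ θ (x i) / f₀ (x i)) ∂Prn) ≤
          ENNReal.ofReal
              (Real.exp (C * t ^ 2 + t * ((Real.sqrt n)⁻¹ * ∑ i, γt (x i)))) *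
            ∫⁻ θ, ENNReal.ofReal
              (∏ i, (fθ θ (x i) * Real.exp (-t * γt (x i) / Real.sqrt n) /
                  ∫ u in Set.Icc (0 : ℝ) 1,
                    fθ θ u * Real.exp (-t * γt u / Real.sqrt n)) /
                f₀ (x i)) ∂Prn := by
  refine ⟨4*m^2+2, by positivity, ?_⟩
  intro ρ₀ hρ₀ hρD f₀ hf₀m hf₀b hf₀int n hn a ha hna Θ mΘ Prn hPrn fθ hfθm hfθ0 hfθint hHell
    γ hγm hγbdd γt hγtdef hγtm2 hγtB x hx t ht
  obtain ⟨G, hG⟩ := hγbdd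
  have hn1 : (1:ℝ) ≤ (n:ℝ) := by exact_mod_cast hn
  have hnpos : (0:ℝ) < n := by linarith
  have hs : (0:ℝ) < Real.sqrt n := Real.sqrt_pos.mpr hnpos
  have hss : Real.sqrt n * Real.sqrt n = (n:ℝ) := Real.mul_self_sqrt hnpos.le
  have hsa : 1 ≤ Real.sqrt n * a := by
    nlinarith [hss, hna, mul_pos hs ha]
  have hlog2 : (1:ℝ)/2 ≤ Real.log 2 := by
    have := Real.log_two_gt_d9; linarith
  have hlogn1 : Real.log 2 ≤ Real.log ((n:ℝ)+1) :=
    Real.log_le_log (by norm_num) (by linarith)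
  have hL : (0:ℝ) < Real.log ((n:ℝ)+1) := by linarith
  have hBpos : 0 < (4*a*Real.log ((n:ℝ)+1))⁻¹ := by positivity
  have hBa : (4*a*Real.log ((n:ℝ)+1))⁻¹ * a ≤ 2⁻¹ := by
    have e : (4*a*Real.log ((n:ℝ)+1))⁻¹ * a = (4*Real.log ((n:ℝ)+1))⁻¹ := by
      field_simp
    rw [e]
    exact inv_anti₀ (by norm_num) (by linarith)
  have htb : |t| ≤ Real.log ((n:ℝ)+1) := ht.trans (Real.log_le_log hnpos (by linarith))
  have hub : ∀ y ∈ Set.Icc (0:ℝ) 1, |t * γt y / Real.sqrt n| ≤ 4⁻¹ := by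
    intro y hy
    rw [abs_div, abs_mul, abs_of_pos hs, div_le_iff₀ hs]
    have h1 : |t| * |γt y| ≤ Real.log ((n:ℝ)+1) * (4*a*Real.log ((n:ℝ)+1))⁻¹ :=
      mul_le_mul htb (hγtB y hy) (abs_nonneg _) hL.le
    have h2 : Real.log ((n:ℝ)+1) * (4*a*Real.log ((n:ℝ)+1))⁻¹ = (4*a)⁻¹ := by
      field_simp
    have h3 : (4*a)⁻¹ ≤ 4⁻¹ * Real.sqrt n := by
      rw [inv_le_iff_one_le_mul₀ (by positivity)]
      nlinarith [hsa]
    calc |t| * |γt y| ≤ (4*a)⁻¹ := by rw [← h2]; exact h1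
      _ ≤ 4⁻¹ * Real.sqrt n := h3
  have hf₀nn : ∀ y ∈ Set.Icc (0:ℝ) 1, 0 ≤ f₀ y := fun y hy => le_trans hρ₀.le (hf₀b y hy).1
  have hf₀pos : ∀ i, 0 < f₀ (x i) := fun i => lt_of_lt_of_le hρ₀ (hf₀b _ (hx i)).1
  have hγtm : Measurable γt := by rw [hγtdef]; exact hγm.sub measurable_const
  have hW : t * ((Real.sqrt n)⁻¹ * ∑ i, γt (x i)) = ∑ i, t * γt (x i) / Real.sqrt n := by
    rw [Finset.mul_sum, Finset.mul_sum]
    exact Finset.sum_congr rfl fun i _ => by ring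
  have hae : ∀ᵐ θ ∂Prn, ENNReal.ofReal
      (Real.exp (t * Real.sqrt n *
          ∫ u in Set.Icc (0 : ℝ) 1, (fθ θ u - f₀ u) * γ u) *
        ∏ i, fθ θ (x i) / f₀ (x i)) ≤
      ENNReal.ofReal
          (Real.exp ((4*m^2+2) * t ^ 2 + t * ((Real.sqrt n)⁻¹ * ∑ i, γt (x i)))) *
        ENNReal.ofReal
          (∏ i, (fθ θ (x i) * Real.exp (-t * γt (x i) / Real.sqrt n) /
              ∫ u in Set.Icc (0 : ℝ) 1,
                fθ θ u * Real.exp (-t * γt u / Real.sqrt n)) /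
            f₀ (x i)) := by
    filter_upwards [hHell] with θ hθ
    have hFm : Measurable (fθ θ) := hfθm.of_uncurry_left
    have hF0 := hfθ0 θ
    have hFint := hfθint θ
    have hXnn : 0 ≤ ∫ y in Set.Icc (0:ℝ) 1, (Real.sqrt (fθ θ y) - Real.sqrt (f₀ y))^2 :=
      setIntegral_nonneg measurableSet_Icc fun y _ => sq_nonneg _
    have hθ' : (∫ y in Set.Icc (0:ℝ) 1, (Real.sqrt (fθ θ y) - Real.sqrt (f₀ y))^2) ≤ a^2 := by
      calc (∫ y in Set.Icc (0:ℝ) 1, (Real.sqrt (fθ θ y) - Real.sqrt (f₀ y))^2)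
          = Real.sqrt (∫ y in Set.Icc (0:ℝ) 1,
              (Real.sqrt (fθ θ y) - Real.sqrt (f₀ y))^2) ^ 2 := (Real.sq_sqrt hXnn).symm
        _ ≤ a^2 := pow_le_pow_left₀ (Real.sqrt_nonneg _) hθ 2
    have hkey := key_bound m a t n f₀ (fθ θ) γ γt hm ha hn1 hf₀m hf₀nn hf₀int hFm hF0 hFint
      hγm G hG hγtdef hγtm2 _ hBpos hγtB hBa hub hθ'
    have hZlb := Zlb t n (fθ θ) γt hF0 hFint hγtm hub
    have hZp : 0 < ∫ y in Set.Icc (0:ℝ) 1, fθ θ y * Real.exp (-t * γt y / Real.sqrt n) :=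
      lt_of_lt_of_le (Real.exp_pos _) hZlb
    set Z := ∫ y in Set.Icc (0:ℝ) 1, fθ θ y * Real.exp (-t * γt y / Real.sqrt n) with hZdef
    rw [← ENNReal.ofReal_mul (Real.exp_nonneg _)]
    apply ENNReal.ofReal_le_ofReal
    set P := ∏ i, fθ θ (x i) / f₀ (x i) with hPdef
    set P' := ∏ i, (fθ θ (x i) * Real.exp (-t * γt (x i) / Real.sqrt n) / Z) / f₀ (x i)
      with hP'def
    have hP'nn : 0 ≤ P' := Finset.prod_nonneg fun i _ =>
      div_nonneg (div_nonneg (mul_nonneg (hF0 _ (hx i)) (Real.exp_pos _).le) hZp.le)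
        (hf₀pos i).le
    have e1 : P' = P * (Real.exp (∑ i, -(t * γt (x i) / Real.sqrt n)) * (Z⁻¹)^(n:ℕ)) := by
      rw [hP'def, hPdef]
      calc (∏ i, (fθ θ (x i) * Real.exp (-t * γt (x i) / Real.sqrt n) / Z) / f₀ (x i))
          = ∏ i, (fθ θ (x i) / f₀ (x i)) *
              (Real.exp (-(t * γt (x i) / Real.sqrt n)) * Z⁻¹) :=
            Finset.prod_congr rfl fun i _ => by
              rw [show -t * γt (x i) / Real.sqrt n = -(t * γt (x i) / Real.sqrt n) from by
                ring]
              ring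
        _ = (∏ i, fθ θ (x i) / f₀ (x i)) *
              ∏ i, (Real.exp (-(t * γt (x i) / Real.sqrt n)) * Z⁻¹) :=
            Finset.prod_mul_distrib
        _ = (∏ i, fθ θ (x i) / f₀ (x i)) *
              (Real.exp (∑ i, -(t * γt (x i) / Real.sqrt n)) * (Z⁻¹)^(n:ℕ)) := by
            rw [Finset.prod_mul_distrib, Finset.prod_const, ← Real.exp_sum]
            simp [Finset.card_univ]
    have hz : Z^(n:ℕ) * (Z⁻¹)^(n:ℕ) = 1 := by
      rw [← mul_pow, mul_inv_cancel₀ hZp.ne', one_pow]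
    have he : Real.exp (∑ i, t * γt (x i) / Real.sqrt n) *
        Real.exp (∑ i, -(t * γt (x i) / Real.sqrt n)) = 1 := by
      rw [← Real.exp_add, ← Finset.sum_add_distrib]
      simp
    have hprod : Z^(n:ℕ) * Real.exp (∑ i, t * γt (x i) / Real.sqrt n) * P' = P := by
      rw [e1]
      calc Z^(n:ℕ) * Real.exp (∑ i, t * γt (x i) / Real.sqrt n) *
            (P * (Real.exp (∑ i, -(t * γt (x i) / Real.sqrt n)) * (Z⁻¹)^(n:ℕ)))
          = P * ((Z^(n:ℕ) * (Z⁻¹)^(n:ℕ)) *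
              (Real.exp (∑ i, t * γt (x i) / Real.sqrt n) *
                Real.exp (∑ i, -(t * γt (x i) / Real.sqrt n)))) := by ring
        _ = P := by rw [hz, he]; ring
    calc Real.exp (t * Real.sqrt n *
            ∫ u in Set.Icc (0 : ℝ) 1, (fθ θ u - f₀ u) * γ u) * P
        = (Real.exp (t * Real.sqrt n *
            ∫ u in Set.Icc (0 : ℝ) 1, (fθ θ u - f₀ u) * γ u) * Z^(n:ℕ)) *
          (Real.exp (∑ i, t * γt (x i) / Real.sqrt n) * P') := by rw [← hprod]; ring
      _ ≤ Real.exp ((4*m^2+2) * t^2) *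
          (Real.exp (∑ i, t * γt (x i) / Real.sqrt n) * P') :=
          mul_le_mul_of_nonneg_right hkey (mul_nonneg (Real.exp_pos _).le hP'nn)
      _ = Real.exp ((4*m^2+2) * t^2 + t * ((Real.sqrt n)⁻¹ * ∑ i, γt (x i))) * P' := by
          rw [Real.exp_add, hW]; ring
  calc (∫⁻ θ, ENNReal.ofReal
        (Real.exp (t * Real.sqrt n *
            ∫ u in Set.Icc (0 : ℝ) 1, (fθ θ u - f₀ u) * γ u) *
          ∏ i, fθ θ (x i) / f₀ (x i)) ∂Prn)
      ≤ ∫⁻ θ, ENNReal.ofReal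
            (Real.exp ((4*m^2+2) * t ^ 2 + t * ((Real.sqrt n)⁻¹ * ∑ i, γt (x i)))) *
          ENNReal.ofReal
            (∏ i, (fθ θ (x i) * Real.exp (-t * γt (x i) / Real.sqrt n) /
                ∫ u in Set.Icc (0 : ℝ) 1,
                  fθ θ u * Real.exp (-t * γt u / Real.sqrt n)) /
              f₀ (x i)) ∂Prn := lintegral_mono_ae hae
    _ = _ := lintegral_const_mul' _ _ ENNReal.ofReal_ne_top
end
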